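/- arXiv:2402.03237 — 9 statements merged into one kernel-verified Lean document; each statement's English description precedes it below -/
import Mathlib

section
/- Let (x_j)_{j∈J} be a frame for a finite-dimensional real inner product space H, let λ>0 and α>0. If the map x ↦ (φ_λ(⟨x,x_j⟩))_{j∈J} is injective on the closed ball αB_H (i.e., the frame does λ-saturation recovery on αB_H), then for every x∈H with ‖x‖≤α the subfamily (x_j)_{j∈J_λ(x)}, where J_λ(x)={j∈J : |⟨x,x_j⟩|≤λ}, is a frame of H (equivalently, it spans H). -/
local notation "⟪" x ", " y "⟫" => @inner ℝ _ _ x y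

/-- The saturation function `φ_λ`: `φ_λ(t) = t` if `|t| ≤ λ` and `φ_λ(t) = sign(t)·λ` else. -/
noncomputable def satur (l t : ℝ) : ℝ := max (-l) (min l t)

lemma satur_eq_of_le {l s : ℝ} (hl : 0 < l) (h : l ≤ s) : satur l s = l := by
  unfold satur
  rw [min_eq_left h, max_eq_right (by linarith)]

lemma satur_eq_of_ge {l s : ℝ} (hl : 0 < l) (h : s ≤ -l) : satur l s = -l := by
  unfold satur
  rw [min_eq_right (by linarith), max_eq_left h]

theorem saturation_recovery_implies_unsaturated_span
    {H : Type*} [NormedAddCommGroup H] [InnerProductSpace ℝ H] [FiniteDimensional ℝ H]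
    {J : Type*} (xv : J → H) (lam α : ℝ) (hlam : 0 < lam) (hα : 0 < α)
    (hframe : ∃ A B : ℝ, 0 < A ∧ 0 < B ∧ ∀ y : H,
      A * ‖y‖ ^ 2 ≤ ∑' j, ⟪y, xv j⟫ ^ 2 ∧ ∑' j, ⟪y, xv j⟫ ^ 2 ≤ B * ‖y‖ ^ 2)
    (hinj : Set.InjOn (fun x : H => fun j : J => satur lam ⟪x, xv j⟫)
      (Metric.closedBall (0 : H) α)) :
    ∀ x : H, ‖x‖ ≤ α →
      Submodule.span ℝ (xv '' {j : J | |⟪x, xv j⟫| ≤ lam}) = ⊤ := by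
  classical
  intro x hx
  by_contra hspan
  set K := Submodule.span ℝ (xv '' {j : J | |⟪x, xv j⟫| ≤ lam}) with hK
  have hKbot : Kᗮ ≠ ⊥ := by
    intro h
    exact hspan (Submodule.orthogonal_eq_bot_iff.mp h)
  obtain ⟨y, hyK, hy0⟩ := Submodule.exists_mem_ne_zero_of_ne_bot hKbot
  have hd0 : ∀ j : J, |⟪x, xv j⟫| ≤ lam → ⟪y, xv j⟫ = 0 := by
    intro j hj
    have hmem : xv j ∈ K := Submodule.subset_span ⟨j, hj, rfl⟩
    have := (Submodule.mem_orthogonal K y).mp hyK (xv j) hmem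
    rw [real_inner_comm]
    exact this
  -- finiteness of the saturated set
  have hSfin : {j : J | lam < |⟪x, xv j⟫|}.Finite := by
    rcases eq_or_ne x 0 with rfl | hx0
    · have : {j : J | lam < |⟪(0 : H), xv j⟫|} = ∅ := by
        ext j
        simp only [inner_zero_left, abs_zero, Set.mem_setOf_eq, Set.mem_empty_iff_false,
          iff_false, not_lt]
        linarith
      rw [this]; exact Set.finite_empty
    · obtain ⟨A, B, hA, hB, hAB⟩ := hframe
      have hnx : 0 < ‖x‖ := norm_pos_iff.mpr hx0
      have hsum : Summable (fun j => ⟪x, xv j⟫ ^ 2) := by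
        by_contra hns
        have h0 := tsum_eq_zero_of_not_summable hns
        have h1 := (hAB x).1
        rw [h0] at h1
        nlinarith [mul_pos hA (pow_pos hnx 2)]
      have hev : ∀ᶠ j in Filter.cofinite, ⟪x, xv j⟫ ^ 2 < lam ^ 2 :=
        hsum.tendsto_cofinite_zero.eventually (gt_mem_nhds (by positivity))
      refine (Filter.eventually_cofinite.mp hev).subset ?_
      intro j hj
      simp only [Set.mem_setOf_eq] at hj ⊢
      intro hlt
      nlinarith [abs_nonneg ⟪x, xv j⟫, sq_abs ⟪x, xv j⟫]
  -- lower gap δ on saturated coordinates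
  obtain ⟨δ, hδpos, hδ⟩ : ∃ δ > 0, ∀ j ∈ hSfin.toFinset, lam + δ ≤ |⟪x, xv j⟫| := by
    rcases hSfin.toFinset.eq_empty_or_nonempty with he | hne
    · exact ⟨1, one_pos, by simp [he]⟩
    · refine ⟨hSfin.toFinset.inf' hne fun j => |⟪x, xv j⟫| - lam, ?_, ?_⟩
      · rw [gt_iff_lt, Finset.lt_inf'_iff]
        intro j hj
        have := hSfin.mem_toFinset.mp hj
        simp only [Set.mem_setOf_eq] at this
        linarith
      · intro j hj
        have := Finset.inf'_le (fun j => |⟪x, xv j⟫| - lam) hj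
        linarith
  -- bound Kb on |⟪y, xv j⟫| over saturated coordinates
  obtain ⟨Kb, hKb0, hKb⟩ : ∃ Kb : ℝ, 0 ≤ Kb ∧ ∀ j ∈ hSfin.toFinset, |⟪y, xv j⟫| ≤ Kb := by
    rcases hSfin.toFinset.eq_empty_or_nonempty with he | hne
    · exact ⟨0, le_refl 0, by simp [he]⟩
    · refine ⟨hSfin.toFinset.sup' hne fun j => |⟪y, xv j⟫|, ?_, ?_⟩
      · obtain ⟨j, hj⟩ := hne
        exact le_trans (abs_nonneg _) (Finset.le_sup' (f := fun j => |⟪y, xv j⟫|) hj)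
      · intro j hj
        exact Finset.le_sup' (f := fun j => |⟪y, xv j⟫|) hj
  have hny : 0 < ‖y‖ := norm_pos_iff.mpr hy0
  set t : ℝ := δ / (2 * (lam + δ)) with ht
  have htpos : 0 < t := by positivity
  have ht1 : t < 1 := by
    rw [ht, div_lt_one (by positivity)]
    linarith
  have htkey : t * (lam + δ) = δ / 2 := by
    rw [ht]; field_simp
  set ε : ℝ := min (δ / (2 * (Kb + 1))) (t * α / ‖y‖) with hε
  have hεpos : 0 < ε := by
    apply lt_min
    · positivity
    · positivity
  have hεKb : ε * Kb ≤ δ / 2 := by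
    have h1 : ε ≤ δ / (2 * (Kb + 1)) := min_le_left _ _
    have h2 : ε * Kb ≤ δ / (2 * (Kb + 1)) * Kb := by
      apply mul_le_mul_of_nonneg_right h1 hKb0
    have h3 : δ / (2 * (Kb + 1)) * Kb ≤ δ / 2 := by
      rw [div_mul_eq_mul_div, div_le_div_iff₀ (by positivity) (by norm_num)]
      nlinarith
    linarith
  have hεy : ε * ‖y‖ ≤ t * α := by
    have h1 : ε ≤ t * α / ‖y‖ := min_le_right _ _
    calc ε * ‖y‖ ≤ t * α / ‖y‖ * ‖y‖ := by
          apply mul_le_mul_of_nonneg_right h1 (le_of_lt hny)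
      _ = t * α := by field_simp
  set u : H := (1 - t) • x with hu
  set v : H := u + ε • y with hv
  have humem : u ∈ Metric.closedBall (0 : H) α := by
    rw [Metric.mem_closedBall, dist_zero_right, hu, norm_smul, Real.norm_eq_abs,
      abs_of_nonneg (by linarith)]
    nlinarith [norm_nonneg x]
  have hvmem : v ∈ Metric.closedBall (0 : H) α := by
    rw [Metric.mem_closedBall, dist_zero_right, hv]
    calc ‖u + ε • y‖ ≤ ‖u‖ + ‖ε • y‖ := norm_add_le _ _
      _ ≤ (1 - t) * α + ε * ‖y‖ := by
          rw [hu, norm_smul, norm_smul, Real.norm_eq_abs, Real.norm_eq_abs,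
            abs_of_nonneg (by linarith : (0:ℝ) ≤ 1 - t), abs_of_nonneg (le_of_lt hεpos)]
          gcongr
      _ ≤ (1 - t) * α + t * α := by linarith
      _ = α := by ring
  have hcoord : ∀ j : J, satur lam ⟪u, xv j⟫ = satur lam ⟪v, xv j⟫ := by
    intro j
    have hiu : ⟪u, xv j⟫ = (1 - t) * ⟪x, xv j⟫ := real_inner_smul_left _ _ _
    have hiv : ⟪v, xv j⟫ = (1 - t) * ⟪x, xv j⟫ + ε * ⟪y, xv j⟫ := by
      rw [hv, inner_add_left, real_inner_smul_left, real_inner_smul_left]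
    by_cases hj : |⟪x, xv j⟫| ≤ lam
    · rw [hiu, hiv, hd0 j hj, mul_zero, add_zero]
    · push_neg at hj
      have hjT : j ∈ hSfin.toFinset := hSfin.mem_toFinset.mpr hj
      have hgap : lam + δ ≤ |⟪x, xv j⟫| := hδ j hjT
      have hdb : |⟪y, xv j⟫| ≤ Kb := hKb j hjT
      have hεd : |ε * ⟪y, xv j⟫| ≤ δ / 2 := by
        rw [abs_mul, abs_of_nonneg (le_of_lt hεpos)]
        calc ε * |⟪y, xv j⟫| ≤ ε * Kb := by
              apply mul_le_mul_of_nonneg_left hdb (le_of_lt hεpos)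
          _ ≤ δ / 2 := hεKb
      have hεd' := abs_le.mp hεd
      have h1t : (1 - t) * (lam + δ) = lam + δ / 2 := by
        have : (1 - t) * (lam + δ) = (lam + δ) - t * (lam + δ) := by ring
        rw [this, htkey]; ring
      rcases le_or_gt 0 ⟪x, xv j⟫ with hc | hc
      · have hcval : lam + δ ≤ ⟪x, xv j⟫ := by
          rwa [abs_of_nonneg hc] at hgap
        have h2 : (1 - t) * (lam + δ) ≤ (1 - t) * ⟪x, xv j⟫ :=
          mul_le_mul_of_nonneg_left hcval (by linarith)
        have hul : lam ≤ ⟪u, xv j⟫ := by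
          rw [hiu]; linarith
        have hvl : lam ≤ ⟪v, xv j⟫ := by
          rw [hiv]; linarith [hεd'.1]
        rw [satur_eq_of_le hlam hul, satur_eq_of_le hlam hvl]
      · have hcval : ⟪x, xv j⟫ ≤ -(lam + δ) := by
          rcases abs_cases ⟪x, xv j⟫ with ⟨h, _⟩ | ⟨h, _⟩
          · linarith
          · linarith
        have h2 : (1 - t) * ⟪x, xv j⟫ ≤ (1 - t) * (-(lam + δ)) :=
          mul_le_mul_of_nonneg_left hcval (by linarith)
        have h3 : (1 - t) * (-(lam + δ)) = -(lam + δ / 2) := by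
          rw [mul_neg, h1t]
        have hul : ⟪u, xv j⟫ ≤ -lam := by
          rw [hiu]; linarith
        have hvl : ⟪v, xv j⟫ ≤ -lam := by
          rw [hiv]; linarith [hεd'.2]
        rw [satur_eq_of_ge hlam hul, satur_eq_of_ge hlam hvl]
  have huv : u = v := hinj humem hvmem (funext hcoord)
  have : ε • y = 0 := by
    rw [hv] at huv
    exact left_eq_add.mp huv
  rcases smul_eq_zero.mp this with h | h
  · exact absurd h (ne_of_gt hεpos)
  · exact hy0 h
end

section
/- Let (x_j)_{j∈J} be a frame for a finite-dimensional real inner product space H, let λ>0 and α>0. If for every x∈H with ‖x‖≤α the subfamily (x_j)_{j∈J_λ(x)} with J_λ(x)={j∈J : |⟨x,x_j⟩|≤λ} is a frame of H, then for every x∈H with ‖x‖<α the subfamily (x_j)_{j∈J_λ^♯(x)} with J_λ^♯(x)={j∈J : |⟨x,x_j⟩|<λ} is a frame of H. -/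
/-! Stretch `x` by a factor `c > 1` that keeps it in the closed ball of radius `α`: an index with
`|⟪c • x, x_j⟫| ≤ λ` then has `|⟪x, x_j⟫| ≤ λ / c < λ`, so `J_λ(c • x) ⊆ J_λ^♯(x)`. -/

local notation "⟪" x ", " y "⟫" => @inner ℝ _ _ x y

lemma abs_lt_of_abs_mul_le {a c l : ℝ} (hc : 1 < c) (hl : 0 < l) (h : |c * a| ≤ l) : |a| < l := by
  rw [abs_mul, abs_of_pos (one_pos.trans hc)] at h
  nlinarith [abs_nonneg a]

lemma exists_one_lt_norm_smul_le {E : Type*} [SeminormedAddCommGroup E] [NormedSpace ℝ E]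
    {x : E} {α : ℝ} (hx : ‖x‖ < α) : ∃ c : ℝ, 1 < c ∧ ‖c • x‖ ≤ α := by
  have hα : 0 < α := (norm_nonneg x).trans_lt hx
  have hpos : 0 < α + ‖x‖ := by positivity
  refine ⟨2 * α / (α + ‖x‖), (one_lt_div hpos).2 (by linarith), ?_⟩
  rw [norm_smul, Real.norm_of_nonneg (by positivity), div_mul_eq_mul_div, div_le_iff₀ hpos]
  nlinarith [norm_nonneg x]

lemma setOf_abs_inner_smul_le_subset {H J : Type*} [NormedAddCommGroup H] [InnerProductSpace ℝ H]
    (xv : J → H) (x : H) {c lam : ℝ} (hc : 1 < c) (hlam : 0 < lam) :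
    {j | |⟪c • x, xv j⟫| ≤ lam} ⊆ {j | |⟪x, xv j⟫| < lam} := fun j hj =>
  abs_lt_of_abs_mul_le hc hlam (real_inner_smul_left x (xv j) c ▸ hj)

theorem closed_unsaturated_frame_implies_open_unsaturated_frame_general
    {H : Type*} [NormedAddCommGroup H] [InnerProductSpace ℝ H]
    {J : Type*} (xv : J → H) (lam α : ℝ) (hlam : 0 < lam)
    (hyp : ∀ x : H, ‖x‖ ≤ α →
      Submodule.span ℝ (xv '' {j : J | |⟪x, xv j⟫| ≤ lam}) = ⊤) :
    ∀ x : H, ‖x‖ < α →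
      Submodule.span ℝ (xv '' {j : J | |⟪x, xv j⟫| < lam}) = ⊤ := by
  intro x hx
  obtain ⟨c, hc, hcx⟩ := exists_one_lt_norm_smul_le hx
  rw [eq_top_iff, ← hyp (c • x) hcx]
  exact Submodule.span_mono (Set.image_mono (setOf_abs_inner_smul_le_subset xv x hc hlam))

theorem closed_unsaturated_frame_implies_open_unsaturated_frame
    {H : Type*} [NormedAddCommGroup H] [InnerProductSpace ℝ H] [FiniteDimensional ℝ H]
    {J : Type*} (xv : J → H) (lam α : ℝ) (hlam : 0 < lam) (hα : 0 < α)
    (hframe : ∃ A B : ℝ, 0 < A ∧ 0 < B ∧ ∀ y : H,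
      A * ‖y‖ ^ 2 ≤ ∑' j, ⟪y, xv j⟫ ^ 2 ∧ ∑' j, ⟪y, xv j⟫ ^ 2 ≤ B * ‖y‖ ^ 2)
    (hyp : ∀ x : H, ‖x‖ ≤ α →
      Submodule.span ℝ (xv '' {j : J | |⟪x, xv j⟫| ≤ lam}) = ⊤) :
    ∀ x : H, ‖x‖ < α →
      Submodule.span ℝ (xv '' {j : J | |⟪x, xv j⟫| < lam}) = ⊤ :=
  closed_unsaturated_frame_implies_open_unsaturated_frame_general xv lam α hlam hyp
end

section
/- Let (x_j)_{j∈J} be a frame for a finite-dimensional real inner product space H, let λ>0 and α>0. If for every x∈H with ‖x‖<α the subfamily (x_j)_{j∈J_λ^♯(x)} with J_λ^♯(x)={j∈J : |⟨x,x_j⟩|<λ} is a frame of H, then the map x ↦ (φ_λ(⟨x,x_j⟩))_{j∈J} is injective on the closed ball αB_H (i.e., the frame does λ-saturation recovery on αB_H). -/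
/-!
If `x ≠ y` lie in the closed ball of radius `α`, strict convexity puts their midpoint `m` in the
open ball, so the vectors `x_j` with `|⟪m, x_j⟫| < λ` span `H`. For each such `j` the numbers
`⟪x, x_j⟫` and `⟪y, x_j⟫` have midpoint in `(-λ, λ)`, and `φ_λ` cannot identify two such numbers
unless they are equal; so equal saturated measurements force `x - y` to be orthogonal to a
spanning family.
-/

local notation "⟪" x ", " y "⟫" => @inner ℝ _ _ x y

theorem eq_of_satur_eq_of_abs_midpoint_lt {l a b : ℝ} (h : satur l a = satur l b)
    (hm : |midpoint ℝ a b| < l) : a = b := by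
  rw [midpoint_eq_smul_add, smul_eq_mul, abs_lt] at hm
  norm_num at hm
  simp only [satur, min_def, max_def] at h
  split_ifs at h <;> linarith

theorem real_inner_midpoint_left {E : Type*} [NormedAddCommGroup E] [InnerProductSpace ℝ E]
    (x y v : E) : ⟪midpoint ℝ x y, v⟫ = midpoint ℝ ⟪x, v⟫ ⟪y, v⟫ := by
  simp only [midpoint_eq_smul_add, inner_add_left, real_inner_smul_left, smul_eq_mul, mul_add]

theorem eq_zero_of_inner_eq_zero_of_span_eq_top {𝕜 E : Type*} [RCLike 𝕜] [NormedAddCommGroup E]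
    [InnerProductSpace 𝕜 E] {s : Set E} (hs : Submodule.span 𝕜 s = ⊤) {z : E}
    (hz : ∀ u ∈ s, inner 𝕜 z u = 0) : z = 0 := by
  have hortho : Submodule.span 𝕜 {z} ⟂ Submodule.span 𝕜 s :=
    Submodule.isOrtho_span.2 fun u hu v hv => by rw [Set.mem_singleton_iff.1 hu]; exact hz v hv
  rwa [hs, Submodule.isOrtho_top_right, Submodule.span_singleton_eq_bot] at hortho

theorem open_unsaturated_frame_implies_saturation_recovery_general
    {H : Type*} [NormedAddCommGroup H] [InnerProductSpace ℝ H]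
    {J : Type*} (xv : J → H) (lam α : ℝ)
    (hyp : ∀ x : H, ‖x‖ < α →
      Submodule.span ℝ (xv '' {j : J | |⟪x, xv j⟫| < lam}) = ⊤) :
    Set.InjOn (fun x : H => fun j : J => satur lam ⟪x, xv j⟫)
      (Metric.closedBall (0 : H) α) := by
  intro x hx y hy hsat
  by_contra hne
  have hmid : ‖midpoint ℝ x y‖ < α := mem_ball_zero_iff.1 <|
    openSegment_subset_ball_of_ne hx hy hne (midpoint_mem_openSegment x y)
  refine hne (sub_eq_zero.1 <| eq_zero_of_inner_eq_zero_of_span_eq_top (hyp _ hmid) ?_)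
  rintro _ ⟨j, hj, rfl⟩
  rw [Set.mem_ofPred_eq, real_inner_midpoint_left] at hj
  rw [inner_sub_left, eq_of_satur_eq_of_abs_midpoint_lt (congrFun hsat j) hj, sub_self]

theorem open_unsaturated_frame_implies_saturation_recovery
    {H : Type*} [NormedAddCommGroup H] [InnerProductSpace ℝ H] [FiniteDimensional ℝ H]
    {J : Type*} (xv : J → H) (lam α : ℝ) (hlam : 0 < lam) (hα : 0 < α)
    (hframe : ∃ A B : ℝ, 0 < A ∧ 0 < B ∧ ∀ y : H,
      A * ‖y‖ ^ 2 ≤ ∑' j, ⟪y, xv j⟫ ^ 2 ∧ ∑' j, ⟪y, xv j⟫ ^ 2 ≤ B * ‖y‖ ^ 2)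
    (hyp : ∀ x : H, ‖x‖ < α →
      Submodule.span ℝ (xv '' {j : J | |⟪x, xv j⟫| < lam}) = ⊤) :
    Set.InjOn (fun x : H => fun j : J => satur lam ⟪x, xv j⟫)
      (Metric.closedBall (0 : H) α) :=
  open_unsaturated_frame_implies_saturation_recovery_general xv lam α hyp
end

section
/- Let (x_j)_{j∈J} be a finite frame of a finite-dimensional real inner product space H and let λ_c be the infimum of all λ>0 such that (x_j)_{j∈J} does λ-saturation recovery on the closed unit ball B_H. Then (x_j)_{j∈J} does λ_c-saturation recovery on B_H; that is, the map x ↦ (φ_{λ_c}(⟨x,x_j⟩))_{j∈J} is injective on B_H. -/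
local notation "⟪" x ", " y "⟫" => @inner ℝ _ _ x y

lemma satur_eq_self {l t : ℝ} (h : |t| ≤ l) : satur l t = t := by
  rw [satur, min_eq_right (abs_le.mp h).2, max_eq_right (abs_le.mp h).1]

lemma satur_of_le {l t : ℝ} (hl : 0 ≤ l) (h : l ≤ t) : satur l t = l := by
  rw [satur, min_eq_left h, max_eq_right (neg_le_self hl)]

lemma satur_of_ge {l t : ℝ} (hl : 0 ≤ l) (h : t ≤ -l) : satur l t = -l := by
  rw [satur, min_eq_right (h.trans ((neg_le_self hl))), max_eq_left h]

lemma satur_smul {c l t : ℝ} (hc : 0 ≤ c) : satur (c * l) (c * t) = c * satur l t := by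
  rw [satur, satur, mul_max_of_nonneg _ _ hc, mul_min_of_nonneg _ _ hc, mul_neg]

lemma satur_comp {l l' t : ℝ} (h0 : 0 ≤ l) (h : l ≤ l') :
    satur l (satur l' t) = satur l t := by
  rcases le_total l' t with h1 | h1
  · rw [satur_of_le (h0.trans h) h1, satur_of_le h0 h, satur_of_le h0 (h.trans h1)]
  rcases le_total t (-l') with h2 | h2
  · rw [satur_of_ge (h0.trans h) h2, satur_of_ge h0 (neg_le_neg h),
      satur_of_ge h0 (h2.trans (neg_le_neg h))]
  · rw [satur_eq_self (abs_le.mpr ⟨h2, h1⟩)]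

lemma satur_cases {l a b : ℝ} (hl : 0 < l) (h : satur l a = satur l b) :
    a = b ∨ (l ≤ a ∧ l ≤ b) ∨ (a ≤ -l ∧ b ≤ -l) := by
  rcases le_total l a with ha | ha
  · rw [satur_of_le hl.le ha] at h
    rcases le_total l b with hb | hb
    · exact Or.inr (Or.inl ⟨ha, hb⟩)
    rcases le_total b (-l) with hb2 | hb2
    · rw [satur_of_ge hl.le hb2] at h; linarith
    · rw [satur_eq_self (abs_le.mpr ⟨hb2, hb⟩)] at h
      exact Or.inr (Or.inl ⟨ha, h.le⟩)
  rcases le_total a (-l) with ha2 | ha2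
  · rw [satur_of_ge hl.le ha2] at h
    rcases le_total l b with hb | hb
    · rw [satur_of_le hl.le hb] at h; linarith
    rcases le_total b (-l) with hb2 | hb2
    · exact Or.inr (Or.inr ⟨ha2, hb2⟩)
    · rw [satur_eq_self (abs_le.mpr ⟨hb2, hb⟩)] at h
      exact Or.inr (Or.inr ⟨ha2, h.symm.le⟩)
  · rw [satur_eq_self (abs_le.mpr ⟨ha2, ha⟩)] at h
    rcases le_total l b with hb | hb
    · rw [satur_of_le hl.le hb] at h; exact Or.inr (Or.inl ⟨h.ge, hb⟩)
    rcases le_total b (-l) with hb2 | hb2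
    · rw [satur_of_ge hl.le hb2] at h; exact Or.inr (Or.inr ⟨h.le, hb2⟩)
    · rw [satur_eq_self (abs_le.mpr ⟨hb2, hb⟩)] at h; exact Or.inl h

lemma eq_zero_of_inner_eq_zero {H : Type*} [NormedAddCommGroup H] [InnerProductSpace ℝ H]
    {J : Type*} (xv : J → H) (hframe : Submodule.span ℝ (Set.range xv) = ⊤)
    (v : H) (hv : ∀ j, ⟪v, xv j⟫ = 0) : v = 0 := by
  have key : ∀ z ∈ Submodule.span ℝ (Set.range xv), ⟪v, z⟫ = 0 := by
    intro z hz
    induction hz using Submodule.span_induction with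
    | mem x hx => obtain ⟨j, rfl⟩ := hx; exact hv j
    | zero => exact inner_zero_right v
    | add x y _ _ hx hy => rw [inner_add_right, hx, hy, add_zero]
    | smul a x _ hx => rw [real_inner_smul_right, hx, mul_zero]
  have := key v (by rw [hframe]; exact Submodule.mem_top)
  exact inner_self_eq_zero.mp this

theorem recovery_at_critical_saturation_level
    {H : Type*} [NormedAddCommGroup H] [InnerProductSpace ℝ H] [FiniteDimensional ℝ H]
    {J : Type*} [Fintype J] (xv : J → H)
    (hframe : Submodule.span ℝ (Set.range xv) = ⊤)
    (lamc : ℝ)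
    (hlamc : lamc = sInf {l : ℝ | 0 < l ∧ Set.InjOn
      (fun x : H => fun j : J => satur l ⟪x, xv j⟫) (Metric.closedBall (0 : H) 1)}) :
    Set.InjOn (fun x : H => fun j : J => satur lamc ⟪x, xv j⟫)
      (Metric.closedBall (0 : H) 1) := by
  by_cases hsub : Subsingleton H
  · intro x _ y _ _; exact Subsingleton.elim x y
  have : Nontrivial H := not_subsingleton_iff_nontrivial.mp hsub
  set S := {l : ℝ | 0 < l ∧ Set.InjOn
      (fun x : H => fun j : J => satur l ⟪x, xv j⟫) (Metric.closedBall (0 : H) 1)} with hS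
  -- S is nonempty
  have hSne : S.Nonempty := by
    refine ⟨1 + ∑ j, ‖xv j‖, by positivity, ?_⟩
    intro x hx y hy hxy
    have hbnd : ∀ z : H, z ∈ Metric.closedBall (0 : H) 1 → ∀ j,
        satur (1 + ∑ j, ‖xv j‖) ⟪z, xv j⟫ = ⟪z, xv j⟫ := by
      intro z hz j
      apply satur_eq_self
      have h1 : |⟪z, xv j⟫| ≤ ‖z‖ * ‖xv j‖ := abs_real_inner_le_norm z (xv j)
      have h2 : ‖z‖ ≤ 1 := by simpa using Metric.mem_closedBall.mp hz
      have h3 : ‖xv j‖ ≤ ∑ i, ‖xv i‖ :=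
        Finset.single_le_sum (fun i _ => norm_nonneg (xv i)) (Finset.mem_univ j)
      nlinarith [norm_nonneg (xv j)]
    have hsub' : x - y = 0 := by
      apply eq_zero_of_inner_eq_zero xv hframe
      intro j
      have := congrFun hxy j
      simp only [hbnd x hx j, hbnd y hy j] at this
      rw [inner_sub_left, this, sub_self]
    exact sub_eq_zero.mp hsub'
  -- Lower bound: lamc > 0
  obtain ⟨u0, hu0⟩ := exists_ne (0 : H)
  obtain ⟨u, hu⟩ : ∃ u : H, ‖u‖ = 1 := ⟨‖u0‖⁻¹ • u0, norm_smul_inv_norm hu0⟩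
  set F := Finset.univ.filter (fun j => ⟪u, xv j⟫ ≠ 0) with hF_def
  have hF : F.Nonempty := by
    rw [Finset.filter_nonempty_iff]
    by_contra hcon
    push_neg at hcon
    have : u = 0 := eq_zero_of_inner_eq_zero xv hframe u
      (fun j => hcon j (Finset.mem_univ j))
    rw [this, norm_zero] at hu; norm_num at hu
  set c : ℝ := F.inf' hF (fun j => |⟪u, xv j⟫|) with hc_def
  have hc_pos : 0 < c := by
    rw [hc_def, Finset.lt_inf'_iff]
    intro j hj
    rw [hF_def, Finset.mem_filter] at hj
    exact abs_pos.mpr hj.2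
  have hLB : ∀ l ∈ S, c / 2 ≤ l := by
    rintro l ⟨hl0, hinj⟩
    by_contra hcon
    push_neg at hcon
    have hmem1 : u ∈ Metric.closedBall (0 : H) 1 := by
      simp [Metric.mem_closedBall, hu]
    have hmem2 : (1/2 : ℝ) • u ∈ Metric.closedBall (0 : H) 1 := by
      simp [Metric.mem_closedBall, norm_smul, hu]
      norm_num
    have heq : (fun j : J => satur l ⟪u, xv j⟫) =
        (fun j : J => satur l ⟪(1/2 : ℝ) • u, xv j⟫) := by
      funext j
      have hsm : ⟪(1/2 : ℝ) • u, xv j⟫ = (1/2 : ℝ) * ⟪u, xv j⟫ := real_inner_smul_left _ _ _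
      rw [hsm]
      by_cases ha : ⟪u, xv j⟫ = 0
      · rw [ha, mul_zero]
      · have hjF : j ∈ F := by rw [hF_def, Finset.mem_filter]; exact ⟨Finset.mem_univ j, ha⟩
        have hca : c ≤ |⟪u, xv j⟫| := Finset.inf'_le _ hjF
        rcases lt_or_gt_of_ne ha with hneg | hpos
        · have h1 : ⟪u, xv j⟫ ≤ -c := by rw [abs_of_neg hneg] at hca; linarith
          rw [satur_of_ge hl0.le (by linarith), satur_of_ge hl0.le (by linarith)]
        · have h1 : c ≤ ⟪u, xv j⟫ := by rw [abs_of_pos hpos] at hca; linarith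
          rw [satur_of_le hl0.le (by linarith), satur_of_le hl0.le (by linarith)]
    have hu2 : (1/2 : ℝ) • u = u := (hinj hmem1 hmem2 heq).symm
    have h : (-(1/2) : ℝ) • u = 0 := by
      have h0 : (1/2 : ℝ) • u - u = 0 := sub_eq_zero.mpr hu2
      rw [← h0]; module
    rcases smul_eq_zero.mp h with h | h
    · norm_num at h
    · rw [h, norm_zero] at hu; norm_num at hu
  have hlamc_ge : c / 2 ≤ lamc := by
    rw [hlamc]; exact le_csInf hSne hLB
  have hlamc_pos : 0 < lamc := lt_of_lt_of_le (by linarith) hlamc_ge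
  -- main argument
  intro x hx y hy hxy
  by_contra hne
  -- strictly interior pair
  set x' : H := (3/4 : ℝ) • x + (1/4 : ℝ) • y with hx'_def
  set y' : H := (1/4 : ℝ) • x + (3/4 : ℝ) • y with hy'_def
  have hx'ball : x' ∈ Metric.ball (0 : H) 1 := by
    have := strictConvex_closedBall ℝ (0 : H) 1 hx hy hne
      (by norm_num : (0:ℝ) < 3/4) (by norm_num : (0:ℝ) < 1/4) (by norm_num)
    rwa [interior_closedBall _ one_ne_zero] at this
  have hy'ball : y' ∈ Metric.ball (0 : H) 1 := by
    have := strictConvex_closedBall ℝ (0 : H) 1 hx hy hne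
      (by norm_num : (0:ℝ) < 1/4) (by norm_num : (0:ℝ) < 3/4) (by norm_num)
    rwa [interior_closedBall _ one_ne_zero] at this
  have hne' : x' ≠ y' := by
    intro h
    apply hne
    have h2 : (1/2 : ℝ) • x = (1/2 : ℝ) • y := by
      have := sub_eq_zero.mpr h
      rw [hx'_def, hy'_def] at this
      have h3 : (1/2 : ℝ) • x - (1/2 : ℝ) • y = 0 := by
        rw [← this]; module
      rw [sub_eq_zero] at h3; exact h3
    have := smul_right_injective H (by norm_num : (1/2 : ℝ) ≠ 0) h2
    exact this
  -- measurements of x' and y' agree at level lamc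
  have hmeas : ∀ j, satur lamc ⟪x', xv j⟫ = satur lamc ⟪y', xv j⟫ := by
    intro j
    have hax' : ⟪x', xv j⟫ = (3/4 : ℝ) * ⟪x, xv j⟫ + (1/4 : ℝ) * ⟪y, xv j⟫ := by
      rw [hx'_def, inner_add_left, real_inner_smul_left, real_inner_smul_left]
    have hay' : ⟪y', xv j⟫ = (1/4 : ℝ) * ⟪x, xv j⟫ + (3/4 : ℝ) * ⟪y, xv j⟫ := by
      rw [hy'_def, inner_add_left, real_inner_smul_left, real_inner_smul_left]
    rcases satur_cases hlamc_pos (congrFun hxy j) with h | ⟨h1, h2⟩ | ⟨h1, h2⟩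
    · rw [hax', hay', h]; ring_nf
    · rw [hax', hay', satur_of_le hlamc_pos.le (by linarith),
        satur_of_le hlamc_pos.le (by linarith)]
    · rw [hax', hay', satur_of_ge hlamc_pos.le (by linarith),
        satur_of_ge hlamc_pos.le (by linarith)]
  -- scale up
  set r : ℝ := max ‖x'‖ ‖y'‖ with hr_def
  have hr1 : r < 1 := max_lt (by simpa using Metric.mem_ball.mp hx'ball)
    (by simpa using Metric.mem_ball.mp hy'ball)
  have hr0 : 0 ≤ r := le_trans (norm_nonneg x') (le_max_left _ _)
  set ρ : ℝ := (r + 1) / 2 with hρ_def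
  have hρ0 : 0 < ρ := by rw [hρ_def]; linarith
  have hρ1 : ρ < 1 := by rw [hρ_def]; linarith
  have hrρ : r ≤ ρ := by rw [hρ_def]; linarith
  set l' : ℝ := lamc / ρ with hl'_def
  have hl'gt : lamc < l' := by
    rw [hl'_def, lt_div_iff₀ hρ0]
    nlinarith
  obtain ⟨l, hlS, hll'⟩ : ∃ l ∈ S, l < l' := by
    apply exists_lt_of_csInf_lt hSne
    rw [← hlamc]; exact hl'gt
  obtain ⟨hl0, hinj⟩ := hlS
  set X : H := ρ⁻¹ • x' with hX_def
  set Y : H := ρ⁻¹ • y' with hY_def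
  have hXball : X ∈ Metric.closedBall (0 : H) 1 := by
    rw [Metric.mem_closedBall, dist_zero_right, hX_def, norm_smul,
      Real.norm_eq_abs, abs_of_pos (inv_pos.mpr hρ0)]
    rw [inv_mul_le_iff₀ hρ0, mul_one]
    exact le_trans (le_max_left _ _) hrρ
  have hYball : Y ∈ Metric.closedBall (0 : H) 1 := by
    rw [Metric.mem_closedBall, dist_zero_right, hY_def, norm_smul,
      Real.norm_eq_abs, abs_of_pos (inv_pos.mpr hρ0)]
    rw [inv_mul_le_iff₀ hρ0, mul_one]
    exact le_trans (le_max_right _ _) hrρ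
  have hmeasXY : (fun j : J => satur l ⟪X, xv j⟫) = (fun j : J => satur l ⟪Y, xv j⟫) := by
    funext j
    have hXj : ⟪X, xv j⟫ = ρ⁻¹ * ⟪x', xv j⟫ := real_inner_smul_left _ _ _
    have hYj : ⟪Y, xv j⟫ = ρ⁻¹ * ⟪y', xv j⟫ := real_inner_smul_left _ _ _
    have hl'eq : l' = ρ⁻¹ * lamc := by rw [hl'_def]; field_simp
    have hsatX : satur l' ⟪X, xv j⟫ = ρ⁻¹ * satur lamc ⟪x', xv j⟫ := by
      rw [hXj, hl'eq, satur_smul (le_of_lt (inv_pos.mpr hρ0))]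
    have hsatY : satur l' ⟪Y, xv j⟫ = ρ⁻¹ * satur lamc ⟪y', xv j⟫ := by
      rw [hYj, hl'eq, satur_smul (le_of_lt (inv_pos.mpr hρ0))]
    have hsatEq : satur l' ⟪X, xv j⟫ = satur l' ⟪Y, xv j⟫ := by
      rw [hsatX, hsatY, hmeas j]
    calc satur l ⟪X, xv j⟫ = satur l (satur l' ⟪X, xv j⟫) :=
          (satur_comp hl0.le hll'.le).symm
      _ = satur l (satur l' ⟪Y, xv j⟫) := by rw [hsatEq]
      _ = satur l ⟪Y, xv j⟫ := satur_comp hl0.le hll'.le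
  have hXY : X = Y := hinj hXball hYball hmeasXY
  apply hne'
  rw [hX_def, hY_def] at hXY
  exact smul_right_injective H (ne_of_gt (inv_pos.mpr hρ0)) hXY
end

section
/- Let (x_j)_{j∈J} be a finite frame of a finite-dimensional real inner product space H which does λ_c-saturation recovery on the closed unit ball B_H, where λ_c>0. Then for every sign pattern (ε_j)_{j∈J}∈{−1,0,1}^J there is at most one x∈B_H such that (x_j)_{j∈J_{λ_c}^♯(x)} is not a frame of H, ε_j = sign(⟨x,x_j⟩) for all j∉J_{λ_c}^♯(x), and ε_j=0 for all j∈J_{λ_c}^♯(x). -/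
local notation "⟪" x ", " y "⟫" => @inner ℝ _ _ x y

lemma satur_eq_of_sat {l e v : ℝ} (hl : 0 < l) (he : e = 1 ∨ e = -1)
    (h : l ≤ e * v) : satur l v = e * l := by
  rcases he with rfl | rfl
  · unfold satur
    rw [min_eq_left (by linarith), max_eq_right (by linarith)]
    ring
  · unfold satur
    rw [min_eq_right (by linarith), max_eq_left (by linarith)]
    ring

set_option maxHeartbeats 1600000 in
theorem at_most_one_failure_per_sign_pattern
    {H : Type*} [NormedAddCommGroup H] [InnerProductSpace ℝ H] [FiniteDimensional ℝ H]
    {J : Type*} [Fintype J] (xv : J → H)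
    (hframe : Submodule.span ℝ (Set.range xv) = ⊤)
    (lamc : ℝ) (hlamc : 0 < lamc)
    (hrec : Set.InjOn (fun x : H => fun j : J => satur lamc ⟪x, xv j⟫)
      (Metric.closedBall (0 : H) 1)) :
    ∀ ε : J → ℝ, (∀ j, ε j = -1 ∨ ε j = 0 ∨ ε j = 1) →
      ∀ x ∈ Metric.closedBall (0 : H) 1, ∀ y ∈ Metric.closedBall (0 : H) 1,
        (Submodule.span ℝ (xv '' {j : J | |⟪x, xv j⟫| < lamc}) ≠ ⊤ ∧
          (∀ j : J, ¬ |⟪x, xv j⟫| < lamc → ε j = Real.sign ⟪x, xv j⟫) ∧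
          (∀ j : J, |⟪x, xv j⟫| < lamc → ε j = 0)) →
        (Submodule.span ℝ (xv '' {j : J | |⟪y, xv j⟫| < lamc}) ≠ ⊤ ∧
          (∀ j : J, ¬ |⟪y, xv j⟫| < lamc → ε j = Real.sign ⟪y, xv j⟫) ∧
          (∀ j : J, |⟪y, xv j⟫| < lamc → ε j = 0)) →
        x = y := by
  intro ε hε x hx y hy hxc hyc
  by_contra hxy
  obtain ⟨hKne, hsx, hzx⟩ := hxc
  obtain ⟨-, hsy, hzy⟩ := hyc
  have hxn : ‖x‖ ≤ 1 := by simpa [dist_eq_norm] using hx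
  have hyn : ‖y‖ ≤ 1 := by simpa [dist_eq_norm] using hy
  -- get u ≠ 0 orthogonal to the unsaturated vectors
  set K := Submodule.span ℝ (xv '' {j : J | |⟪x, xv j⟫| < lamc}) with hK
  have hKbot : Kᗮ ≠ ⊥ := fun h => hKne (Submodule.orthogonal_eq_bot_iff.mp h)
  obtain ⟨u, huK, hu0⟩ := Submodule.exists_mem_ne_zero_of_ne_bot hKbot
  have hu : ∀ j : J, |⟪x, xv j⟫| < lamc → ⟪u, xv j⟫ = 0 := by
    intro j hj
    have hmem : xv j ∈ K := Submodule.subset_span ⟨j, hj, rfl⟩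
    have := (Submodule.mem_orthogonal K u).mp huK (xv j) hmem
    rwa [real_inner_comm] at this
  -- key estimates off the unsaturated set
  have key : ∀ j : J, ¬ |⟪x, xv j⟫| < lamc →
      (ε j = 1 ∨ ε j = -1) ∧ lamc ≤ ε j * ⟪x, xv j⟫ ∧ lamc ≤ ε j * ⟪y, xv j⟫ := by
    intro j hj
    have hxabs : lamc ≤ |⟪x, xv j⟫| := le_of_not_gt hj
    have hxne : ⟪x, xv j⟫ ≠ 0 := by
      intro h; rw [h, abs_zero] at hxabs; linarith
    have hex : ε j = Real.sign ⟪x, xv j⟫ := hsx j hj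
    have hexx : ε j * ⟪x, xv j⟫ = |⟪x, xv j⟫| := by
      rcases hxne.lt_or_gt with h | h
      · rw [hex, Real.sign_of_neg h, abs_of_neg h]; ring
      · rw [hex, Real.sign_of_pos h, abs_of_pos h]; ring
    have he1 : ε j = 1 ∨ ε j = -1 := by
      rcases hxne.lt_or_gt with h | h
      · right; rw [hex, Real.sign_of_neg h]
      · left; rw [hex, Real.sign_of_pos h]
    have hjy : ¬ |⟪y, xv j⟫| < lamc := by
      intro h
      have := hzy j h
      rcases he1 with h1 | h1 <;> rw [h1] at this <;> linarith
    have hyabs : lamc ≤ |⟪y, xv j⟫| := le_of_not_gt hjy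
    have hyne : ⟪y, xv j⟫ ≠ 0 := by
      intro h; rw [h, abs_zero] at hyabs; linarith
    have hey : ε j = Real.sign ⟪y, xv j⟫ := hsy j hjy
    have heyy : ε j * ⟪y, xv j⟫ = |⟪y, xv j⟫| := by
      rcases hyne.lt_or_gt with h | h
      · rw [hey, Real.sign_of_neg h, abs_of_neg h]; ring
      · rw [hey, Real.sign_of_pos h, abs_of_pos h]; ring
    exact ⟨he1, by rw [hexx]; exact hxabs, by rw [heyy]; exact hyabs⟩
  -- midpoint strictly inside the ball
  set m := (2:ℝ)⁻¹ • (x + y) with hm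
  have hmn : ‖m‖ < 1 := by
    have hpar := parallelogram_law_with_norm ℝ x y
    have hd : 0 < ‖x - y‖ := by
      rw [norm_pos_iff, sub_ne_zero]; exact hxy
    have h4 : ‖x + y‖ < 2 := by
      nlinarith [norm_nonneg (x + y), norm_nonneg x, norm_nonneg y]
    rw [hm, norm_smul]
    simp only [norm_inv, Real.norm_ofNat]
    linarith
  have hminner : ∀ j : J, ⟪m, xv j⟫ = (2:ℝ)⁻¹ * (⟪x, xv j⟫ + ⟪y, xv j⟫) := by
    intro j
    rw [hm, real_inner_smul_left, inner_add_left]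
  -- constants
  set a := ‖m‖ with ha
  have ha0 : 0 ≤ a := norm_nonneg m
  set t := (1 - a) / 2 with ht
  have ht0 : 0 < t := by rw [ht]; linarith
  set c := 1 + ∑ j : J, |⟪u, xv j⟫| with hc
  have hc1 : 1 ≤ c := by
    rw [hc]
    have : 0 ≤ ∑ j : J, |⟪u, xv j⟫| := Finset.sum_nonneg fun j _ => abs_nonneg _
    linarith
  have hc0 : 0 < c := by linarith
  have hcj : ∀ j : J, |⟪u, xv j⟫| ≤ c := by
    intro j
    have : |⟪u, xv j⟫| ≤ ∑ j : J, |⟪u, xv j⟫| :=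
      Finset.single_le_sum (f := fun j : J => |⟪u, xv j⟫|) (fun j _ => abs_nonneg _)
        (Finset.mem_univ j)
    linarith
  have hun : 0 < ‖u‖ := norm_pos_iff.mpr hu0
  set s := min ((1 - a) / (2 * ‖u‖)) (t * lamc / c) with hs
  have ha1 : a < 1 := hmn
  have hs0 : 0 < s := by
    apply lt_min
    · apply div_pos (by linarith) (by positivity)
    · exact div_pos (mul_pos ht0 hlamc) hc0
  -- the two points
  set z₁ := (1 + t) • m with hz₁
  set z₂ := (1 + t) • m + s • u with hz₂
  have hz₁n : ‖z₁‖ ≤ (1 + a) / 2 := by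
    rw [hz₁, norm_smul, Real.norm_eq_abs, abs_of_pos (by linarith : (0:ℝ) < 1 + t), ← ha]
    nlinarith
  have hz₁mem : z₁ ∈ Metric.closedBall (0 : H) 1 := by
    simp only [Metric.mem_closedBall, dist_zero_right]
    linarith
  have hz₂mem : z₂ ∈ Metric.closedBall (0 : H) 1 := by
    simp only [Metric.mem_closedBall, dist_zero_right]
    have h1 : ‖z₂‖ ≤ ‖z₁‖ + s * ‖u‖ := by
      rw [hz₂, hz₁]
      calc ‖(1 + t) • m + s • u‖ ≤ ‖(1 + t) • m‖ + ‖s • u‖ := norm_add_le _ _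
        _ = ‖(1 + t) • m‖ + s * ‖u‖ := by
            rw [norm_smul s u, Real.norm_eq_abs, abs_of_pos hs0]
    have h2 : s * ‖u‖ ≤ (1 - a) / 2 := by
      have h3 : s * ‖u‖ ≤ (1 - a) / (2 * ‖u‖) * ‖u‖ :=
        mul_le_mul_of_nonneg_right (min_le_left _ _) hun.le
      have h4 : (1 - a) / (2 * ‖u‖) * ‖u‖ = (1 - a) / 2 := by
        field_simp
      linarith
    linarith
  -- equal saturated measurements
  have heq : (fun j : J => satur lamc ⟪z₁, xv j⟫) = (fun j : J => satur lamc ⟪z₂, xv j⟫) := by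
    funext j
    have hinner₂ : ⟪z₂, xv j⟫ = ⟪z₁, xv j⟫ + s * ⟪u, xv j⟫ := by
      simp only [hz₁, hz₂, hm, inner_add_left, real_inner_smul_left]
    by_cases hj : |⟪x, xv j⟫| < lamc
    · rw [hinner₂, hu j hj, mul_zero, add_zero]
    · obtain ⟨he1, hkx, hky⟩ := key j hj
      have hz₁in : ⟪z₁, xv j⟫ = (1 + t) * ⟪m, xv j⟫ := by
        simp only [hz₁, real_inner_smul_left]
      have hmj : lamc ≤ ε j * ⟪m, xv j⟫ := by
        rw [hminner j]
        have : ε j * ((2:ℝ)⁻¹ * (⟪x, xv j⟫ + ⟪y, xv j⟫))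
            = (2:ℝ)⁻¹ * (ε j * ⟪x, xv j⟫ + ε j * ⟪y, xv j⟫) := by ring
        rw [this]
        linarith
      have hsat₁ : lamc ≤ ε j * ⟪z₁, xv j⟫ := by
        rw [hz₁in]
        have : ε j * ((1 + t) * ⟪m, xv j⟫) = (1 + t) * (ε j * ⟪m, xv j⟫) := by ring
        rw [this]
        nlinarith
      have hsc : s * c ≤ t * lamc := by
        have hmin : s ≤ t * lamc / c := min_le_right _ _
        calc s * c ≤ (t * lamc / c) * c := mul_le_mul_of_nonneg_right hmin (le_of_lt hc0)
          _ = t * lamc := by field_simp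
      have habs : |s * ⟪u, xv j⟫| ≤ t * lamc := by
        rw [abs_mul, abs_of_pos hs0]
        calc s * |⟪u, xv j⟫| ≤ s * c := mul_le_mul_of_nonneg_left (hcj j) (le_of_lt hs0)
          _ ≤ t * lamc := hsc
      have hsat₂ : lamc ≤ ε j * ⟪z₂, xv j⟫ := by
        rw [hinner₂, mul_add]
        have hb : - (t * lamc) ≤ ε j * (s * ⟪u, xv j⟫) := by
          have h1 : |ε j * (s * ⟪u, xv j⟫)| = |s * ⟪u, xv j⟫| := by
            rcases he1 with h | h <;> rw [h] <;> simp
          have := neg_abs_le (ε j * (s * ⟪u, xv j⟫))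
          rw [h1] at this
          linarith
        have h1t : lamc * (1 + t) ≤ ε j * ⟪z₁, xv j⟫ * (1:ℝ) := by
          rw [hz₁in, mul_one]
          have : ε j * ((1 + t) * ⟪m, xv j⟫) = (1 + t) * (ε j * ⟪m, xv j⟫) := by ring
          rw [this]
          nlinarith
        nlinarith [hsat₁, hb]
      rw [satur_eq_of_sat hlamc he1 hsat₁, satur_eq_of_sat hlamc he1 hsat₂]
  have hzz : z₁ = z₂ := hrec hz₁mem hz₂mem heq
  have hsu : s • u = 0 := by
    have h : (1 + t) • m + 0 = (1 + t) • m + s • u := by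
      rw [add_zero, ← hz₁, ← hz₂]; exact hzz
    exact (add_left_cancel h).symm
  rcases smul_eq_zero.mp hsu with h | h
  · exact absurd h (ne_of_gt hs0)
  · exact hu0 h
end

section
/- Let (x_j)_{j=1}^m be a full spark frame of unit vectors in ℝ^n (n≥2, m≥n) and let 0<λ<1, with ε = arccos(λ). Then (x_j)_{j=1}^m does λ-saturation recovery on the closed unit ball of ℝ^n if and only if for every unit vector x∈ℝ^n, the number of indices j∈{1,…,m} with arccos(|⟨x,x_j⟩|) < ε is at most m−n (i.e., the open balls of radius ε centered at the lines [x_j] form an (m−n)-fold multi-packing in real projective space P^{n−1}). -/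
local notation "⟪" x ", " y "⟫" => @inner ℝ _ _ x y

/-!
For a unit vector `x`, `d([x], [x_j]) ≥ ε` means `|⟪x, x_j⟫| ≤ λ`, so the packing condition says
that at every unit `x` at least `n` of the measurements are unsaturated.

If fewer than `n` are unsaturated at `x`, take a unit `u` orthogonal to all of them. Moving `x`
a little towards `u` or towards `0` rescales the unsaturated measurements by the same factor and
keeps the saturated ones saturated, so two distinct points of the ball are not told apart.

Conversely, if `x` and `y` in the ball have the same saturated measurements, then
`⟪x, x_j⟫ = ⟪y, x_j⟫` whenever `|⟪x + y, x_j⟫| ≤ 2λ`; since `‖x + y‖ ≤ 2`, the packing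
condition at the direction of `x + y` provides `n` such indices, and by full spark they
determine `x - y = 0`.
-/

open Filter Module Set Topology

lemma Real.arccos_lt_arccos_iff {x y : ℝ} (hx : -1 ≤ x) (hy : y ≤ 1) :
    Real.arccos y < Real.arccos x ↔ x < y :=
  ⟨fun h => not_le.1 fun hyx => (Real.arccos_le_arccos hyx).not_gt h,
    fun h => Real.arccos_lt_arccos hx h hy⟩

lemma Set.ncard_compl_le_card_sub_iff {α : Type*} [Fintype α] (s : Set α) {k : ℕ}
    (hk : k ≤ Fintype.card α) : sᶜ.ncard ≤ Fintype.card α - k ↔ k ≤ s.ncard := by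
  have := s.ncard_add_ncard_compl
  rw [Nat.card_eq_fintype_card] at this
  omega

section Saturation

variable {l s t : ℝ}

lemma satur_eq_of_abs_sub_le (hl : 0 ≤ l) (h : |s - t| ≤ |t| - l) : satur l s = satur l t := by
  rw [abs_le] at h
  simp only [satur, max_def, min_def]
  split_ifs <;> cases abs_cases t <;> linarith

lemma eq_of_satur_eq (hl : 0 < l) (h : satur l s = satur l t) (hst : |s + t| ≤ 2 * l) :
    s = t := by
  rw [abs_le] at hst
  simp only [satur, max_def, min_def] at h
  split_ifs at h <;> linarith

end Saturation

section FullSpark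

variable {ι E : Type*} [NormedAddCommGroup E] [InnerProductSpace ℝ E]

def IsFullSpark (v : ι → E) : Prop :=
  ∀ s : Finset ι, s.card = finrank ℝ E → LinearIndependent ℝ (fun j : s => v j)

lemma IsFullSpark.ext_inner [FiniteDimensional ℝ E] [Finite ι] {v : ι → E} (hv : IsFullSpark v)
    {s : Set ι} (hs : finrank ℝ E ≤ s.ncard) {x y : E} (h : ∀ j ∈ s, ⟪x, v j⟫ = ⟪y, v j⟫) :
    x = y := by
  obtain ⟨t, hts, htcard⟩ := Set.exists_subset_card_eq hs
  lift t to Finset ι using t.toFinite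
  rw [Set.ncard_coe_finset] at htcard
  let b := basisOfLinearIndependentOfCardEqFinrank' _ (hv t htcard) (by simpa using htcard)
  exact InnerProductSpace.ext_inner_right_basis b fun j => by simpa [b] using h j (hts j.2)

lemma exists_norm_eq_one_forall_inner_eq_zero [FiniteDimensional ℝ E] [Finite ι] (v : ι → E)
    {s : Set ι} (hs : s.ncard < finrank ℝ E) : ∃ u : E, ‖u‖ = 1 ∧ ∀ j ∈ s, ⟪u, v j⟫ = 0 := by
  have := Fintype.ofFinite ι
  classical
  set K := Submodule.span ℝ (range fun j : s => v j)
  have hK : K ≠ ⊤ := by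
    intro hK
    have := finrank_range_le_card (R := ℝ) fun j : s => v j
    change finrank ℝ K ≤ _ at this
    rw [hK, finrank_top, ← Nat.card_eq_fintype_card, Nat.card_coe_set_eq] at this
    omega
  obtain ⟨w, hwK, hw0⟩ := Submodule.exists_mem_ne_zero_of_ne_bot
    (mt Submodule.orthogonal_eq_bot_iff.1 hK)
  refine ⟨‖w‖⁻¹ • w, norm_smul_inv_norm hw0, fun j hj => ?_⟩
  exact Submodule.inner_left_of_mem_orthogonal
    (Submodule.subset_span (mem_range_self (⟨j, hj⟩ : s))) (K.orthogonal.smul_mem _ hwK)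

end FullSpark

section SaturationRecovery

variable {ι E : Type*} [Fintype ι] [NormedAddCommGroup E] [InnerProductSpace ℝ E]
  {v : ι → E} {l : ℝ}

lemma satur_inner_eq_of_norm_sub_le {x y w : E} (hl : 0 ≤ l) (hw : ‖w‖ ≤ 1)
    (h : ‖y - x‖ ≤ |⟪x, w⟫| - l) : satur l ⟪y, w⟫ = satur l ⟪x, w⟫ :=
  satur_eq_of_abs_sub_le hl <| by
    rw [← inner_sub_left]
    calc |⟪y - x, w⟫| ≤ ‖y - x‖ * ‖w‖ := abs_real_inner_le_norm _ _
      _ ≤ ‖y - x‖ := mul_le_of_le_one_right (norm_nonneg _) hw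
      _ ≤ _ := h

lemma le_ncard_abs_inner_le_of_injOn_satur [FiniteDimensional ℝ E] (hv : ∀ j, ‖v j‖ ≤ 1)
    (hl : 0 ≤ l)
    (hinj : InjOn (fun x j => satur l ⟪x, v j⟫) (Metric.closedBall (0 : E) 1))
    {x : E} (hx : ‖x‖ = 1) : finrank ℝ E ≤ {j | |⟪x, v j⟫| ≤ l}.ncard := by
  by_contra! hlt
  obtain ⟨u, hu, hux⟩ := exists_norm_eq_one_forall_inner_eq_zero v hlt
  have hsmall : ∀ᶠ t in 𝓝[>] (0 : ℝ),
      (t ≤ 1 ∧ ∀ j, l < |⟪x, v j⟫| → 2 * t ≤ |⟪x, v j⟫| - l) ∧ 0 < t := by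
    refine (Eventually.filter_mono nhdsWithin_le_nhds ((eventually_le_nhds one_pos).and
      (eventually_all.2 fun j => ?_))).and self_mem_nhdsWithin
    by_cases hj : l < |⟪x, v j⟫|
    · filter_upwards [eventually_le_nhds (half_pos (sub_pos.2 hj))] with t ht _
      linarith
    · exact Eventually.of_forall fun t h => absurd h hj
  obtain ⟨t, ⟨ht1, hfar⟩, ht0⟩ := hsmall.exists
  set y : E → E := fun w => x + t • (w - x)
  have hy_mem : ∀ w : E, ‖w‖ ≤ 1 → y w ∈ Metric.closedBall 0 1 := fun w hw =>
    (convex_closedBall 0 1).add_smul_sub_mem (by simp [hx]) (by simpa using hw) ⟨ht0.le, ht1⟩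
  have hy_dist : ∀ w : E, ‖w‖ ≤ 1 → ‖y w - x‖ ≤ 2 * t := fun w hw =>
    calc ‖y w - x‖ = t * ‖w - x‖ := by simp [y, norm_smul, abs_of_pos ht0]
      _ ≤ t * 2 := by gcongr; linarith [norm_sub_le w x]
      _ = 2 * t := mul_comm _ _
  have hsame : (fun j => satur l ⟪y u, v j⟫) = fun j => satur l ⟪y 0, v j⟫ := by
    funext j
    by_cases hj : |⟪x, v j⟫| ≤ l
    · simp [y, inner_add_left, inner_sub_left, real_inner_smul_left, hux j hj]
    · have hj := hfar j (not_le.1 hj)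
      rw [satur_inner_eq_of_norm_sub_le hl (hv j) ((hy_dist u hu.le).trans hj),
        satur_inner_eq_of_norm_sub_le hl (hv j) ((hy_dist 0 (by simp)).trans hj)]
  have hyu : y u = y 0 := hinj (hy_mem u hu.le) (hy_mem 0 (by simp)) hsame
  have hu0 : u = 0 :=
    sub_left_injective (smul_right_injective E ht0.ne' (add_left_cancel hyu))
  simp [hu0] at hu

lemma le_ncard_abs_inner_le_of_norm_le (hcard : finrank ℝ E ≤ Fintype.card ι) (hl : 0 ≤ l)
    (hpack : ∀ x : E, ‖x‖ = 1 → finrank ℝ E ≤ {j | |⟪x, v j⟫| ≤ l}.ncard)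
    {r : ℝ} {z : E} (hz : ‖z‖ ≤ r) : finrank ℝ E ≤ {j | |⟪z, v j⟫| ≤ r * l}.ncard := by
  rcases eq_or_ne z 0 with rfl | hz0
  · have hr : 0 ≤ r := by simpa using hz
    simpa [mul_nonneg hr hl, Set.ncard_univ] using hcard
  refine (hpack _ (norm_smul_inv_norm (𝕜 := ℝ) hz0)).trans (Set.ncard_le_ncard fun j hj => ?_)
  rw [mem_ofPred_eq, real_inner_smul_left] at hj
  calc |⟪z, v j⟫| = ‖z‖ * |‖z‖⁻¹ * ⟪z, v j⟫| := by
        rw [abs_mul, abs_inv, abs_norm, mul_inv_cancel_left₀ (norm_ne_zero_iff.2 hz0)]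
    _ ≤ r * l := mul_le_mul hz hj (abs_nonneg _) ((norm_nonneg _).trans hz)

lemma injOn_satur_of_forall_le_ncard [FiniteDimensional ℝ E] (hv : IsFullSpark v)
    (hcard : finrank ℝ E ≤ Fintype.card ι) (hl : 0 < l)
    (hpack : ∀ x : E, ‖x‖ = 1 → finrank ℝ E ≤ {j | |⟪x, v j⟫| ≤ l}.ncard) :
    InjOn (fun x j => satur l ⟪x, v j⟫) (Metric.closedBall (0 : E) 1) := by
  intro x hx y hy hxy
  rw [mem_closedBall_zero_iff] at hx hy
  have hxy_norm : ‖x + y‖ ≤ 2 := (norm_add_le x y).trans (by linarith)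
  refine hv.ext_inner (le_ncard_abs_inner_le_of_norm_le hcard hl.le hpack hxy_norm)
    fun j hj => eq_of_satur_eq hl (congrFun hxy j) ?_
  rwa [← inner_add_left]

theorem injOn_satur_iff [FiniteDimensional ℝ E] (hv : IsFullSpark v) (hnorm : ∀ j, ‖v j‖ ≤ 1)
    (hcard : finrank ℝ E ≤ Fintype.card ι) (hl : 0 < l) :
    InjOn (fun x j => satur l ⟪x, v j⟫) (Metric.closedBall (0 : E) 1) ↔
      ∀ x : E, ‖x‖ = 1 → finrank ℝ E ≤ {j | |⟪x, v j⟫| ≤ l}.ncard :=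
  ⟨fun hinj _ hx => le_ncard_abs_inner_le_of_injOn_satur hnorm hl.le hinj hx,
    injOn_satur_of_forall_le_ncard hv hcard hl⟩

end SaturationRecovery

theorem saturation_recovery_iff_multifold_packing_general
    {n m : ℕ} (hmn : n ≤ m)
    (xv : Fin m → EuclideanSpace ℝ (Fin n)) (hunit : ∀ j, ‖xv j‖ = 1)
    (hfs : ∀ s : Finset (Fin m), s.card = n →
      LinearIndependent ℝ (fun j : {j // j ∈ s} => xv j.1))
    (lam : ℝ) (hlam0 : 0 < lam) (hlam1 : lam < 1) :
    Set.InjOn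
        (fun x : EuclideanSpace ℝ (Fin n) => fun j : Fin m => satur lam ⟪x, xv j⟫)
        (Metric.closedBall 0 1) ↔
      ∀ x : EuclideanSpace ℝ (Fin n), ‖x‖ = 1 →
        {j : Fin m | Real.arccos |⟪x, xv j⟫| < Real.arccos lam}.ncard ≤ m - n := by
  have hv : IsFullSpark xv := fun s hs => hfs s (by rwa [finrank_euclideanSpace_fin] at hs)
  rw [injOn_satur_iff hv (fun j => (hunit j).le) (by simpa using hmn) hlam0,
    finrank_euclideanSpace_fin]
  refine forall₂_congr fun x hx => ?_
  have hfar : {j | Real.arccos |⟪x, xv j⟫| < Real.arccos lam} = {j | |⟪x, xv j⟫| ≤ lam}ᶜ := by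
    ext j
    have hle : |⟪x, xv j⟫| ≤ 1 := (abs_real_inner_le_norm _ _).trans (by simp [hx, hunit])
    simp only [mem_ofPred_eq, mem_compl_iff, not_le]
    exact Real.arccos_lt_arccos_iff (x := lam) (by linarith) hle
  have hcount := Set.ncard_compl_le_card_sub_iff {j | |⟪x, xv j⟫| ≤ lam} (by simpa using hmn)
  rw [Fintype.card_fin] at hcount
  rw [hfar, hcount]

theorem saturation_recovery_iff_multifold_packing
    {n m : ℕ} (hn : 2 ≤ n) (hmn : n ≤ m)
    (xv : Fin m → EuclideanSpace ℝ (Fin n)) (hunit : ∀ j, ‖xv j‖ = 1)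
    (hfs : ∀ s : Finset (Fin m), s.card = n →
      LinearIndependent ℝ (fun j : {j // j ∈ s} => xv j.1))
    (lam : ℝ) (hlam0 : 0 < lam) (hlam1 : lam < 1) :
    Set.InjOn
        (fun x : EuclideanSpace ℝ (Fin n) => fun j : Fin m => satur lam ⟪x, xv j⟫)
        (Metric.closedBall 0 1) ↔
      ∀ x : EuclideanSpace ℝ (Fin n), ‖x‖ = 1 →
        {j : Fin m | Real.arccos |⟪x, xv j⟫| < Real.arccos lam}.ncard ≤ m - n :=
  saturation_recovery_iff_multifold_packing_general hmn xv hunit hfs lam hlam0 hlam1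
end

section
/- Let (x_j)_{j=1}^{n+1} be a family of unit vectors in ℝ^n which spans ℝ^n but is not full spark (i.e., some subset of n of the vectors is linearly dependent). Then the critical saturation level λ_c, i.e., the infimum of all λ>0 such that (x_j)_{j=1}^{n+1} does λ-saturation recovery on the closed unit ball of ℝ^n, equals 1. -/
local notation "⟪" x ", " y "⟫" => @inner ℝ _ _ x y

theorem critical_level_of_non_full_spark_n_plus_one_unit_vectors
    {n : ℕ} (xv : Fin (n + 1) → EuclideanSpace ℝ (Fin n))
    (hunit : ∀ j, ‖xv j‖ = 1)
    (hspan : Submodule.span ℝ (Set.range xv) = ⊤)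
    (hnfs : ¬ ∀ s : Finset (Fin (n + 1)), s.card = n →
      LinearIndependent ℝ (fun j : {j // j ∈ s} => xv j.1))
    (lamc : ℝ)
    (hlamc : lamc = sInf {l : ℝ | 0 < l ∧ Set.InjOn
      (fun x : EuclideanSpace ℝ (Fin n) => fun j : Fin (n + 1) => satur l ⟪x, xv j⟫)
      (Metric.closedBall 0 1)}) :
    lamc = 1 := by
  classical
  push_neg at hnfs
  obtain ⟨s, hcard, hdep⟩ := hnfs
  -- complement index
  have hcompl : (sᶜ : Finset (Fin (n+1))).card = 1 := by
    rw [Finset.card_compl, hcard]; simp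
  obtain ⟨j0, hj0c⟩ := Finset.card_eq_one.mp hcompl
  have hj0 : j0 ∉ s := by
    have : j0 ∈ sᶜ := by rw [hj0c]; exact Finset.mem_singleton_self _
    exact Finset.mem_compl.mp this
  have hmem : ∀ j : Fin (n+1), j ≠ j0 → j ∈ s := by
    intro j hj
    by_contra h
    have : j ∈ sᶜ := Finset.mem_compl.mpr h
    rw [hj0c, Finset.mem_singleton] at this
    exact hj this
  -- span of the dependent family is not everything
  set K : Submodule ℝ (EuclideanSpace ℝ (Fin n)) := Submodule.span ℝ (xv '' ↑s) with hK
  have hKne : K ≠ ⊤ := by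
    intro htop
    apply hdep
    apply linearIndependent_of_top_le_span_of_card_eq_finrank
    · have : Set.range (fun j : {j // j ∈ s} => xv j.1) = xv '' ↑s := by
        ext v; constructor
        · rintro ⟨⟨j, hjs⟩, rfl⟩; exact ⟨j, hjs, rfl⟩
        · rintro ⟨j, hjs, rfl⟩; exact ⟨⟨j, hjs⟩, rfl⟩
      rw [this, ← hK, htop]
    · simp [hcard, finrank_euclideanSpace_fin]
  -- orthogonal vector
  have hKo : Kᗮ ≠ ⊥ := by
    intro h
    exact hKne (Submodule.orthogonal_eq_bot_iff.mp h)
  obtain ⟨u, huK, hu0⟩ := Submodule.exists_mem_ne_zero_of_ne_bot hKo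
  have huorth : ∀ j ∈ s, ⟪u, xv j⟫ = 0 := by
    intro j hjs
    have : xv j ∈ K := Submodule.subset_span ⟨j, hjs, rfl⟩
    rw [real_inner_comm]
    exact huK (xv j) this
  have huc : ⟪u, xv j0⟫ ≠ 0 := by
    intro hc
    have hall : ∀ j, ⟪xv j, u⟫ = 0 := by
      intro j
      by_cases hj : j = j0
      · rw [hj, real_inner_comm]; exact hc
      · rw [real_inner_comm]; exact huorth j (hmem j hj)
    have : ∀ v ∈ Submodule.span ℝ (Set.range xv), ⟪v, u⟫ = 0 := by
      intro v hv
      induction hv using Submodule.span_induction with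
      | mem x hx => obtain ⟨j, rfl⟩ := hx; exact hall j
      | zero => simp
      | add x y _ _ hx hy => rw [inner_add_left, hx, hy]; ring
      | smul a x _ hx => rw [inner_smul_left, hx]; simp
    have : ⟪u, u⟫ = (0:ℝ) := this u (by rw [hspan]; trivial)
    exact hu0 (inner_self_eq_zero.mp this)
  -- normalized orthogonal vector with positive inner product with xv j0
  obtain ⟨w, hw1, hworth, hwc⟩ : ∃ w : EuclideanSpace ℝ (Fin n), ‖w‖ = 1 ∧
      (∀ j ∈ s, ⟪w, xv j⟫ = 0) ∧ 0 < ⟪w, xv j0⟫ := by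
    have hun : ‖u‖ ≠ 0 := norm_ne_zero_iff.mpr hu0
    have hnpos : (0:ℝ) < ‖u‖⁻¹ := by positivity
    rcases huc.lt_or_gt with h | h
    · refine ⟨-(‖u‖⁻¹ • u), ?_, ?_, ?_⟩
      · rw [norm_neg, norm_smul]; simp [hun]
      · intro j hjs
        rw [inner_neg_left, real_inner_smul_left, huorth j hjs]; ring
      · rw [inner_neg_left, real_inner_smul_left]
        have : ‖u‖⁻¹ * ⟪u, xv j0⟫ < 0 := mul_neg_of_pos_of_neg hnpos h
        linarith
    · refine ⟨‖u‖⁻¹ • u, ?_, ?_, ?_⟩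
      · rw [norm_smul]; simp [hun]
      · intro j hjs
        rw [real_inner_smul_left, huorth j hjs]; ring
      · rw [real_inner_smul_left]
        exact mul_pos hnpos h
  set c : ℝ := ⟪w, xv j0⟫ with hc
  have hcle : c ≤ 1 := by
    have := real_inner_le_norm w (xv j0)
    rwa [hw1, hunit j0, one_mul] at this
  -- the set
  set S : Set ℝ := {l : ℝ | 0 < l ∧ Set.InjOn
      (fun x : EuclideanSpace ℝ (Fin n) => fun j : Fin (n + 1) => satur l ⟪x, xv j⟫)
      (Metric.closedBall 0 1)} with hS
  -- 1 ∈ S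
  have h1S : (1:ℝ) ∈ S := by
    refine ⟨one_pos, ?_⟩
    intro x hx y hy hxy
    have hx1 : ‖x‖ ≤ 1 := by rwa [Metric.mem_closedBall, dist_zero_right] at hx
    have hy1 : ‖y‖ ≤ 1 := by rwa [Metric.mem_closedBall, dist_zero_right] at hy
    have key : ∀ j, ⟪x, xv j⟫ = ⟪y, xv j⟫ := by
      intro j
      have hxb : |⟪x, xv j⟫| ≤ 1 := by
        have := abs_real_inner_le_norm x (xv j)
        rw [hunit j, mul_one] at this
        linarith
      have hyb : |⟪y, xv j⟫| ≤ 1 := by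
        have := abs_real_inner_le_norm y (xv j)
        rw [hunit j, mul_one] at this
        linarith
      have h1 := congrFun hxy j
      simp only [satur] at h1
      rw [abs_le] at hxb hyb
      rw [min_eq_right hxb.2, max_eq_right hxb.1, min_eq_right hyb.2,
        max_eq_right hyb.1] at h1
      exact h1
    have : ∀ v ∈ Submodule.span ℝ (Set.range xv), ⟪v, x - y⟫ = 0 := by
      intro v hv
      induction hv using Submodule.span_induction with
      | mem z hz =>
          obtain ⟨j, rfl⟩ := hz
          rw [real_inner_comm, inner_sub_left, key j]; ring
      | zero => simp
      | add a b _ _ ha hb => rw [inner_add_left, ha, hb]; ring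
      | smul a z _ hz => rw [inner_smul_left, hz]; simp
    have h0 : ⟪x - y, x - y⟫ = (0:ℝ) := this (x - y) (by rw [hspan]; trivial)
    have := inner_self_eq_zero.mp h0
    exact sub_eq_zero.mp this
  -- every element of S is ≥ 1
  have hge : ∀ l ∈ S, (1:ℝ) ≤ l := by
    rintro l ⟨hl0, hinj⟩
    by_contra hl1
    push_neg at hl1
    set ε : ℝ := min c ((1 - l) / c) with he
    have hε0 : 0 < ε := lt_min hwc (div_pos (by linarith) hwc)
    have hεc : ε ≤ c := min_le_left _ _
    have hεl : ε * c ≤ 1 - l := by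
      have h1 : ε ≤ (1 - l) / c := min_le_right _ _
      calc ε * c ≤ ((1 - l) / c) * c := by nlinarith
        _ = 1 - l := by field_simp
    set y : EuclideanSpace ℝ (Fin n) := xv j0 - ε • w with hy
    have hxball : xv j0 ∈ Metric.closedBall (0 : EuclideanSpace ℝ (Fin n)) 1 := by
      rw [Metric.mem_closedBall, dist_zero_right, hunit j0]
    have hj0self : ⟪xv j0, xv j0⟫ = (1:ℝ) := by
      rw [real_inner_self_eq_norm_sq, hunit j0]; norm_num
    have hyc : ⟪y, xv j0⟫ = 1 - ε * c := by
      rw [hy, inner_sub_left, real_inner_smul_left, hj0self, hc, real_inner_comm]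
    have hynorm : ‖y‖ ≤ 1 := by
      have hsq : ‖y‖^2 = 1 - 2 * (ε * c) + ε^2 := by
        rw [hy, norm_sub_sq_real, hunit j0, real_inner_smul_right, norm_smul,
          hw1, real_inner_comm, ← hc]
        simp [abs_of_pos hε0]
      nlinarith [norm_nonneg y, hwc]
    have hyball : y ∈ Metric.closedBall (0 : EuclideanSpace ℝ (Fin n)) 1 := by
      rwa [Metric.mem_closedBall, dist_zero_right]
    have hne : xv j0 ≠ y := by
      intro h
      have : ε • w = 0 := by
        have := sub_eq_zero.mpr h
        rw [hy] at this
        have h2 : xv j0 - (xv j0 - ε • w) = ε • w := by abel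
        rw [← h2, this]
      rcases smul_eq_zero.mp this with h | h
      · exact hε0.ne' h
      · rw [h, norm_zero] at hw1; norm_num at hw1
    apply hne
    apply hinj hxball hyball
    funext j
    by_cases hj : j = j0
    · subst hj
      simp only [hj0self, hyc, satur]
      have h1 : min l (1:ℝ) = l := min_eq_left (by linarith)
      have h2 : min l (1 - ε * c) = l := min_eq_left (by nlinarith)
      rw [h1, h2]
    · have hjs := hmem j hj
      simp only [hy, inner_sub_left, real_inner_smul_left, hworth j hjs,
        mul_zero, sub_zero]
  -- conclude
  rw [hlamc]
  apply le_antisymm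
  · exact csInf_le ⟨1, fun l hl => hge l hl⟩ h1S
  · exact le_csInf ⟨1, h1S⟩ (fun l hl => hge l hl)
end

section
/- (Frame algorithm) Let (x_j)_{j∈J} be a finite frame of a real Hilbert space H with frame bounds 0<A≤B, i.e., A‖y‖² ≤ Σ_{j∈J}⟨y,x_j⟩² ≤ B‖y‖² for all y∈H. Let 0<α<2/B and x∈H. Define (y_k)_{k=0}^∞ in H by y_0=0 and y_{k+1} = y_k + α Σ_{j∈J} ⟨x−y_k, x_j⟩ x_j for all k≥0. Then ‖x−y_{k+1}‖ ≤ C_α ‖x−y_k‖ for all k≥0, where C_α = max(|1−αA|, |1−αB|) < 1; consequently ‖x−y_k‖ ≤ C_α^k ‖x‖ for all k≥0, and (y_k) converges to x. -/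
local notation "⟪" x ", " y "⟫" => @inner ℝ _ _ x y

/-- For a symmetric linear map whose quadratic form is bounded by `c‖z‖²`, we get `‖T z‖ ≤ c‖z‖`. -/
lemma selfadjoint_norm_bound {H : Type*} [NormedAddCommGroup H] [InnerProductSpace ℝ H]
    (T : H →ₗ[ℝ] H) (c : ℝ)
    (hsym : ∀ u v : H, ⟪T u, v⟫ = ⟪u, T v⟫)
    (hbound : ∀ z : H, |⟪T z, z⟫| ≤ c * ‖z‖ ^ 2) (z : H) : ‖T z‖ ≤ c * ‖z‖ := by
  have hpol : ∀ u v : H, 4 * ⟪T u, v⟫ = ⟪T (u + v), u + v⟫ - ⟪T (u - v), u - v⟫ := by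
    intro u v
    have h1 : ⟪T v, u⟫ = ⟪T u, v⟫ := by
      rw [hsym v u, real_inner_comm]
    simp only [map_add, map_sub, inner_add_left, inner_add_right, inner_sub_left,
      inner_sub_right]
    linarith
  rcases eq_or_ne z 0 with rfl | hz
  · simp
  have hznorm : 0 < ‖z‖ := norm_pos_iff.mpr hz
  have hc : 0 ≤ c := by
    have h := (abs_nonneg _).trans (hbound z)
    have hz2 : 0 < ‖z‖ ^ 2 := by positivity
    nlinarith
  rcases eq_or_ne (T z) 0 with hTz | hTz
  · rw [hTz, norm_zero]
    positivity
  have hTznorm : 0 < ‖T z‖ := norm_pos_iff.mpr hTz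
  set v : H := (‖z‖ / ‖T z‖) • T z with hv
  have hvnorm : ‖v‖ = ‖z‖ := by
    rw [hv, norm_smul, Real.norm_eq_abs, abs_of_pos (by positivity)]
    field_simp
  have hinner : ⟪T z, v⟫ = ‖z‖ * ‖T z‖ := by
    rw [hv, real_inner_smul_right, real_inner_self_eq_norm_sq]
    field_simp
  have key := hpol z v
  rw [hinner] at key
  have hb1 := (abs_le.mp (hbound (z + v))).2
  have hb2 := (abs_le.mp (hbound (z - v))).1
  have hpar1 : ‖z + v‖ ^ 2 = ‖z‖ ^ 2 + 2 * ⟪z, v⟫ + ‖v‖ ^ 2 := norm_add_sq_real z v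
  have hpar2 : ‖z - v‖ ^ 2 = ‖z‖ ^ 2 - 2 * ⟪z, v⟫ + ‖v‖ ^ 2 := norm_sub_sq_real z v
  rw [hpar1] at hb1
  rw [hpar2] at hb2
  rw [hvnorm] at hb1 hb2
  -- 4‖z‖‖Tz‖ ≤ c(‖z+v‖² + ‖z-v‖²) = 4c‖z‖²
  have h4 : 4 * (‖z‖ * ‖T z‖) ≤ 4 * (c * ‖z‖ ^ 2) := by nlinarith
  have := mul_le_mul_of_nonneg_right (by linarith : ‖z‖ * ‖T z‖ ≤ c * ‖z‖ ^ 2)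
    (le_of_lt (inv_pos.mpr hznorm))
  calc ‖T z‖ = ‖z‖ * ‖T z‖ * ‖z‖⁻¹ := by field_simp
    _ ≤ c * ‖z‖ ^ 2 * ‖z‖⁻¹ := this
    _ = c * ‖z‖ := by field_simp

theorem frame_algorithm
    {H : Type*} [NormedAddCommGroup H] [InnerProductSpace ℝ H] [CompleteSpace H]
    {J : Type*} [Fintype J] (xv : J → H) (A B : ℝ) (hA : 0 < A) (hAB : A ≤ B)
    (hframe : ∀ y : H, A * ‖y‖ ^ 2 ≤ ∑ j, ⟪y, xv j⟫ ^ 2 ∧ ∑ j, ⟪y, xv j⟫ ^ 2 ≤ B * ‖y‖ ^ 2)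
    (α : ℝ) (hα0 : 0 < α) (hα : α < 2 / B) (x : H) (y : ℕ → H) (hy0 : y 0 = 0)
    (hrec : ∀ k : ℕ, y (k + 1) = y k + α • ∑ j, ⟪x - y k, xv j⟫ • xv j) :
    (∀ k : ℕ, ‖x - y (k + 1)‖ ≤ max |1 - α * A| |1 - α * B| * ‖x - y k‖) ∧
      max |1 - α * A| |1 - α * B| < 1 ∧
      (∀ k : ℕ, ‖x - y k‖ ≤ (max |1 - α * A| |1 - α * B|) ^ k * ‖x‖) ∧
      Filter.Tendsto y Filter.atTop (nhds x) := by
  have hB : 0 < B := lt_of_lt_of_le hA hAB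
  have hαB : α * B < 2 := by
    rw [lt_div_iff₀ hB] at hα; linarith
  have hαA : 0 < α * A := mul_pos hα0 hA
  have hαAB : α * A ≤ α * B := mul_le_mul_of_nonneg_left hAB hα0.le
  set C : ℝ := max |1 - α * A| |1 - α * B| with hCdef
  have hC0 : 0 ≤ C := (abs_nonneg _).trans (le_max_left _ _)
  have hC1 : C < 1 := by
    apply max_lt <;> rw [abs_lt] <;> constructor <;> linarith
  -- the frame operator
  set S : H →ₗ[ℝ] H := ∑ j, ((innerSL ℝ (xv j)).toLinearMap).smulRight (xv j) with hSdef
  have hS : ∀ z : H, S z = ∑ j, ⟪z, xv j⟫ • xv j := by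
    intro z
    rw [hSdef]
    simp only [LinearMap.coe_sum, Finset.sum_apply, LinearMap.smulRight_apply,
      ContinuousLinearMap.coe_coe, innerSL_apply_apply]
    exact Finset.sum_congr rfl fun j _ => by rw [real_inner_comm]
  set T : H →ₗ[ℝ] H := LinearMap.id - α • S with hTdef
  have hT : ∀ z : H, T z = z - α • S z := by
    intro z; simp [hTdef]
  have hSsym : ∀ u v : H, ⟪S u, v⟫ = ⟪u, S v⟫ := by
    intro u v
    rw [hS, hS, sum_inner, inner_sum]
    refine Finset.sum_congr rfl fun j _ => ?_
    rw [real_inner_smul_left, real_inner_smul_right, real_inner_comm v (xv j), mul_comm]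
  have hsym : ∀ u v : H, ⟪T u, v⟫ = ⟪u, T v⟫ := by
    intro u v
    rw [hT, hT, inner_sub_left, inner_sub_right, real_inner_smul_left, real_inner_smul_right,
      hSsym]
  have hSquad : ∀ z : H, ⟪S z, z⟫ = ∑ j, ⟪z, xv j⟫ ^ 2 := by
    intro z
    rw [hS, sum_inner]
    refine Finset.sum_congr rfl fun j _ => ?_
    rw [real_inner_smul_left, real_inner_comm (xv j) z, sq]
  have hbound : ∀ z : H, |⟪T z, z⟫| ≤ C * ‖z‖ ^ 2 := by
    intro z
    have hq := hframe z
    have hTq : ⟪T z, z⟫ = ‖z‖ ^ 2 - α * ∑ j, ⟪z, xv j⟫ ^ 2 := by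
      rw [hT, inner_sub_left, real_inner_smul_left, hSquad, real_inner_self_eq_norm_sq]
    rw [hTq, abs_le]
    have h1 : |1 - α * A| ≤ C := le_max_left _ _
    have h2 : |1 - α * B| ≤ C := le_max_right _ _
    have h1' : 1 - α * A ≤ |1 - α * A| := le_abs_self _
    have h2' : -(1 - α * B) ≤ |1 - α * B| := neg_le_abs _
    have hz2 : (0:ℝ) ≤ ‖z‖ ^ 2 := sq_nonneg _
    constructor
    · nlinarith [mul_le_mul_of_nonneg_left hq.2 hα0.le]
    · nlinarith [mul_le_mul_of_nonneg_left hq.1 hα0.le]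
  have hcontract : ∀ z : H, ‖T z‖ ≤ C * ‖z‖ := selfadjoint_norm_bound T C hsym hbound
  have hstep : ∀ k : ℕ, x - y (k + 1) = T (x - y k) := by
    intro k
    rw [hrec k, hT, hS]
    abel
  have part1 : ∀ k : ℕ, ‖x - y (k + 1)‖ ≤ C * ‖x - y k‖ := by
    intro k; rw [hstep k]; exact hcontract _
  have part3 : ∀ k : ℕ, ‖x - y k‖ ≤ C ^ k * ‖x‖ := by
    intro k
    induction k with
    | zero => simp [hy0]
    | succ n ih =>
      calc ‖x - y (n + 1)‖ ≤ C * ‖x - y n‖ := part1 n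
        _ ≤ C * (C ^ n * ‖x‖) := mul_le_mul_of_nonneg_left ih hC0
        _ = C ^ (n + 1) * ‖x‖ := by ring
  refine ⟨part1, hC1, part3, ?_⟩
  have h0 : Filter.Tendsto (fun k : ℕ => C ^ k * ‖x‖) Filter.atTop (nhds 0) := by
    simpa using (tendsto_pow_atTop_nhds_zero_of_lt_one hC0 hC1).mul_const ‖x‖
  rw [tendsto_iff_norm_sub_tendsto_zero]
  exact squeeze_zero (fun k => norm_nonneg _)
    (fun k => by rw [norm_sub_rev]; exact part3 k) h0
end

section
/- Let (x_j)_{j∈J} be a finite Parseval frame for a real Hilbert space H, i.e., Σ_{j∈J}⟨y,x_j⟩² = ‖y‖² for all y∈H. Let λ>0, x∈H, and C≥1, and suppose that ‖u−v‖ ≤ C (Σ_{j∈J} (φ_λ(⟨u,x_j⟩) − φ_λ(⟨v,x_j⟩))²)^{1/2} for all u,v∈H with ‖u‖≤2‖x‖ and ‖v‖≤2‖x‖ (C-stable λ-saturation recovery on 2‖x‖B_H). Define (y_k)_{k=0}^∞ by y_0=0 and y_{k+1} = y_k + Σ_{j∈J_λ(x)} (⟨x,x_j⟩−⟨y_k,x_j⟩)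 x_j + Σ_{j∈J_λ^+(x,y_k)} (λ−⟨y_k,x_j⟩) x_j + Σ_{j∈J_λ^−(x,y_k)} (−λ−⟨y_k,x_j⟩) x_j, where J_λ(x)={j : |⟨x,x_j⟩|≤λ}, J_λ^+(x,y)={j : ⟨x,x_j⟩>λ and ⟨y,x_j⟩<λ}, J_λ^−(x,y)={j : ⟨x,x_j⟩<−λ and ⟨y,x_j⟩>−λ}. Then ‖x−y_{k+1}‖² ≤ (1−C^{−2})‖x−y_k‖² for all k≥0, and hence ‖x−y_k‖ ≤ (1−C^{−2})^{k/2}‖x‖ for all k≥0. -/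
local notation "⟪" x ", " y "⟫" => @inner ℝ _ _ x y

noncomputable def coefSat (l a b : ℝ) : ℝ :=
  (if |a| ≤ l then a - b else 0) + (if l < a ∧ b < l then l - b else 0)
    + (if a < -l ∧ -l < b then -l - b else 0)

lemma coefSat_sq_le (l a b : ℝ) (hl : 0 < l) :
    coefSat l a b ^ 2 ≤ coefSat l a b * (a - b) := by
  unfold coefSat
  split_ifs with h1 h2 h3 h3 h2 h3 h3 <;>
    first
      | nlinarith [abs_le.mp ‹|_| ≤ l›]
      | nlinarith [lt_abs.mp (not_le.mp ‹¬ |_| ≤ l›)]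
      | nlinarith

lemma satur_lip (l a b : ℝ) : |satur l a - satur l b| ≤ |a - b| := by
  unfold satur
  calc |max (-l) (min l a) - max (-l) (min l b)| ≤ |min l a - min l b| := by
        simpa [max_comm] using abs_max_sub_max_le_abs (min l a) (min l b) (-l)
    _ ≤ |a - b| := by
        simpa using abs_min_sub_min_le_max l a l b |>.trans (by simp)

lemma satur_sq_le (l a b : ℝ) (hl : 0 < l) :
    (satur l a - satur l b) ^ 2 ≤ coefSat l a b ^ 2 := by
  have key : |satur l a - satur l b| ≤ |coefSat l a b| := by
    unfold coefSat
    split_ifs with h1 h2 h3 h3 h2 h3 h3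
    · exact absurd h2.1 (by linarith [abs_le.mp h1 |>.2])
    · exact absurd h2.1 (by linarith [abs_le.mp h1 |>.2])
    · exact absurd h3.1 (by linarith [abs_le.mp h1 |>.1])
    · simpa using satur_lip l a b
    · exact absurd h3.1 (by linarith [h2.1, hl])
    · -- l < a, b < l : satur a = l, satur b = max (-l) b
      have hsa : satur l a = l := by
        unfold satur; rw [min_eq_left h2.1.le, max_eq_right (by linarith)]
      have hsb : satur l b = max (-l) b := by
        unfold satur; rw [min_eq_right h2.2.le]
      have h1' : b ≤ max (-l) b := le_max_right _ _
      have h2' : max (-l) b ≤ l := max_le (by linarith) h2.2.le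
      rw [hsa, hsb, abs_of_nonneg (by linarith), abs_of_nonneg (by linarith)]
      simpa using by linarith
    · -- a < -l, -l < b : satur a = -l
      have hsa : satur l a = -l := by
        unfold satur; rw [min_eq_right (by linarith), max_eq_left (by linarith)]
      have hsb1 : -l ≤ satur l b := le_max_left _ _
      have hsb2 : satur l b ≤ b := by
        unfold satur
        rcases le_total l b with h | h
        · rw [min_eq_left h]; exact max_le (by linarith) h
        · rw [min_eq_right h]; exact max_le h3.2.le le_rfl
      rw [abs_of_nonpos (by linarith), abs_of_nonpos (by linarith)]
      simpa using by linarith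
    · -- remaining: a out of range, b on the same side
      rcases lt_abs.mp (not_le.mp h1) with h | h
      · have hb : l ≤ b := by by_contra hb; exact h2 ⟨h, not_le.mp hb⟩
        have hsa : satur l a = l := by
          unfold satur; rw [min_eq_left h.le, max_eq_right (by linarith)]
        have hsb : satur l b = l := by
          unfold satur; rw [min_eq_left hb, max_eq_right (by linarith)]
        simp [hsa, hsb]
      · have ha : a < -l := by linarith
        have hb : b ≤ -l := by by_contra hb; exact h3 ⟨ha, not_le.mp hb⟩
        have hsa : satur l a = -l := by
          unfold satur; rw [min_eq_right (by linarith), max_eq_left (by linarith)]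
        have hsb : satur l b = -l := by
          unfold satur; rw [min_eq_right (by linarith), max_eq_left hb]
        simp [hsa, hsb]
  calc (satur l a - satur l b) ^ 2 = |satur l a - satur l b| ^ 2 := (sq_abs _).symm
    _ ≤ |coefSat l a b| ^ 2 := pow_le_pow_left₀ (abs_nonneg _) key 2
    _ = coefSat l a b ^ 2 := sq_abs _

theorem saturated_frame_algorithm_parseval_convergence
    {H : Type*} [NormedAddCommGroup H] [InnerProductSpace ℝ H] [CompleteSpace H]
    {J : Type*} [Fintype J] (xv : J → H)
    (hparseval : ∀ y : H, ∑ j, ⟪y, xv j⟫ ^ 2 = ‖y‖ ^ 2)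
    (lam : ℝ) (hlam : 0 < lam) (x : H) (C : ℝ) (hC : 1 ≤ C)
    (hstable : ∀ u v : H, ‖u‖ ≤ 2 * ‖x‖ → ‖v‖ ≤ 2 * ‖x‖ →
      ‖u - v‖ ≤ C * Real.sqrt (∑ j, (satur lam ⟪u, xv j⟫ - satur lam ⟪v, xv j⟫) ^ 2))
    (y : ℕ → H) (hy0 : y 0 = 0)
    (hrec : ∀ k : ℕ, y (k + 1) = y k
      + ∑ j ∈ Finset.univ.filter (fun j : J => |⟪x, xv j⟫| ≤ lam),
          (⟪x, xv j⟫ - ⟪y k, xv j⟫) • xv j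
      + ∑ j ∈ Finset.univ.filter (fun j : J => lam < ⟪x, xv j⟫ ∧ ⟪y k, xv j⟫ < lam),
          (lam - ⟪y k, xv j⟫) • xv j
      + ∑ j ∈ Finset.univ.filter (fun j : J => ⟪x, xv j⟫ < -lam ∧ -lam < ⟪y k, xv j⟫),
          (-lam - ⟪y k, xv j⟫) • xv j) :
    (∀ k : ℕ, ‖x - y (k + 1)‖ ^ 2 ≤ (1 - C⁻¹ ^ 2) * ‖x - y k‖ ^ 2) ∧
      ∀ k : ℕ, ‖x - y k‖ ≤ (1 - C⁻¹ ^ 2) ^ ((k : ℝ) / 2) * ‖x‖ := by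
  have hC0 : (0:ℝ) < C := lt_of_lt_of_le one_pos hC
  have hCi : C⁻¹ ≤ 1 := inv_le_one_of_one_le₀ hC
  have hCi0 : 0 ≤ C⁻¹ := inv_nonneg.mpr hC0.le
  have hfac0 : 0 ≤ 1 - C⁻¹ ^ 2 := by nlinarith
  have hfac1 : 1 - C⁻¹ ^ 2 ≤ 1 := by nlinarith [sq_nonneg C⁻¹]
  -- the contraction step, valid whenever ‖y k‖ ≤ 2‖x‖
  have step : ∀ k : ℕ, ‖y k‖ ≤ 2 * ‖x‖ →
      ‖x - y (k + 1)‖ ^ 2 ≤ (1 - C⁻¹ ^ 2) * ‖x - y k‖ ^ 2 := by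
    intro k hwb
    set w := y k with hwdef
    set c : J → ℝ := fun j => coefSat lam ⟪x, xv j⟫ ⟪w, xv j⟫ with hc
    set e : H := ∑ j, c j • xv j with he
    set S : ℝ := ∑ j, c j ^ 2 with hS
    have hS0 : 0 ≤ S := Finset.sum_nonneg fun j _ => sq_nonneg _
    have hye : y (k + 1) = w + e := by
      rw [hrec k, he]
      rw [Finset.sum_filter, Finset.sum_filter, Finset.sum_filter]
      rw [add_assoc, add_assoc, ← Finset.sum_add_distrib, ← Finset.sum_add_distrib]
      congr 1
      apply Finset.sum_congr rfl
      intro j _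
      simp only [hc, coefSat, add_smul, ite_smul, zero_smul]
      rw [← hwdef]
      abel
    have hinner : S ≤ ⟪x - w, e⟫ := by
      rw [he, inner_sum, hS]
      apply Finset.sum_le_sum
      intro j _
      rw [real_inner_smul_right, inner_sub_left]
      exact coefSat_sq_le lam ⟪x, xv j⟫ ⟪w, xv j⟫ hlam
    have hee : ‖e‖ ^ 2 = ∑ j, c j * ⟪e, xv j⟫ := by
      rw [← real_inner_self_eq_norm_sq]
      conv_lhs => rw [he]
      rw [sum_inner]
      apply Finset.sum_congr rfl
      intro j _
      rw [real_inner_smul_left, real_inner_comm]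
    have hnorme : ‖e‖ ^ 2 ≤ S := by
      have hcs := Finset.sum_mul_sq_le_sq_mul_sq Finset.univ c (fun j => ⟪e, xv j⟫)
      rw [← hee, hparseval e, ← hS] at hcs
      rcases eq_or_lt_of_le (sq_nonneg ‖e‖) with h | h
      · rw [← h]; exact hS0
      · exact le_of_mul_le_mul_right (by nlinarith) h
    have hstab : ‖x - w‖ ^ 2 ≤ C ^ 2 * S := by
      have h1 := hstable x w (by linarith [norm_nonneg x]) hwb
      have h2 : Real.sqrt (∑ j, (satur lam ⟪x, xv j⟫ - satur lam ⟪w, xv j⟫) ^ 2)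
          ≤ Real.sqrt S := by
        apply Real.sqrt_le_sqrt
        exact Finset.sum_le_sum fun j _ => satur_sq_le lam ⟪x, xv j⟫ ⟪w, xv j⟫ hlam
      have h3 : ‖x - w‖ ≤ C * Real.sqrt S :=
        h1.trans (mul_le_mul_of_nonneg_left h2 hC0.le)
      calc ‖x - w‖ ^ 2 ≤ (C * Real.sqrt S) ^ 2 := pow_le_pow_left₀ (norm_nonneg _) h3 2
        _ = C ^ 2 * S := by rw [mul_pow, Real.sq_sqrt hS0]
    have hstab' : C⁻¹ ^ 2 * ‖x - w‖ ^ 2 ≤ S := by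
      have h4 := mul_le_mul_of_nonneg_left hstab
        (le_of_lt (pow_pos (inv_pos.mpr hC0) 2))
      calc C⁻¹ ^ 2 * ‖x - w‖ ^ 2 ≤ C⁻¹ ^ 2 * (C ^ 2 * S) := h4
        _ = S := by field_simp
    have hexp : ‖x - y (k + 1)‖ ^ 2 = ‖x - w‖ ^ 2 - 2 * ⟪x - w, e⟫ + ‖e‖ ^ 2 := by
      rw [hye, show x - (w + e) = (x - w) - e by abel, norm_sub_sq_real]
    rw [hexp, show (1 - C⁻¹ ^ 2) * ‖x - w‖ ^ 2
      = ‖x - w‖ ^ 2 - C⁻¹ ^ 2 * ‖x - w‖ ^ 2 by ring]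
    linarith
  -- all iterates stay in the ball of radius ‖x‖ around x
  have hb : ∀ k : ℕ, ‖x - y k‖ ≤ ‖x‖ := by
    intro k
    induction k with
    | zero => simp [hy0]
    | succ k ih =>
      have hwb : ‖y k‖ ≤ 2 * ‖x‖ := by
        have h5 : ‖y k‖ = ‖x - (x - y k)‖ := by rw [sub_sub_cancel]
        have h6 := norm_sub_le x (x - y k)
        linarith [h5 ▸ h6]
      have h2 := step k hwb
      have h7 : ‖x - y (k + 1)‖ ^ 2 ≤ ‖x‖ ^ 2 := by
        nlinarith [norm_nonneg (x - y k), norm_nonneg x]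
      calc ‖x - y (k + 1)‖ = Real.sqrt (‖x - y (k + 1)‖ ^ 2) :=
            (Real.sqrt_sq (norm_nonneg _)).symm
        _ ≤ Real.sqrt (‖x‖ ^ 2) := Real.sqrt_le_sqrt h7
        _ = ‖x‖ := Real.sqrt_sq (norm_nonneg _)
  have main1 : ∀ k : ℕ, ‖x - y (k + 1)‖ ^ 2 ≤ (1 - C⁻¹ ^ 2) * ‖x - y k‖ ^ 2 := by
    intro k
    apply step k
    have h5 : ‖y k‖ = ‖x - (x - y k)‖ := by rw [sub_sub_cancel]
    have h6 := norm_sub_le x (x - y k)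
    linarith [h5 ▸ h6, hb k]
  refine ⟨main1, ?_⟩
  have hsq : ∀ k : ℕ, ‖x - y k‖ ^ 2 ≤ (1 - C⁻¹ ^ 2) ^ k * ‖x‖ ^ 2 := by
    intro k
    induction k with
    | zero => simp [hy0]
    | succ k ih =>
      calc ‖x - y (k + 1)‖ ^ 2 ≤ (1 - C⁻¹ ^ 2) * ‖x - y k‖ ^ 2 := main1 k
        _ ≤ (1 - C⁻¹ ^ 2) * ((1 - C⁻¹ ^ 2) ^ k * ‖x‖ ^ 2) :=
            mul_le_mul_of_nonneg_left ih hfac0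
        _ = (1 - C⁻¹ ^ 2) ^ (k + 1) * ‖x‖ ^ 2 := by ring
  intro k
  have hrpow : ((1 - C⁻¹ ^ 2) ^ ((k : ℝ) / 2) * ‖x‖) ^ 2
      = (1 - C⁻¹ ^ 2) ^ k * ‖x‖ ^ 2 := by
    rw [mul_pow, ← Real.rpow_natCast ((1 - C⁻¹ ^ 2) ^ ((k : ℝ) / 2)) 2,
      ← Real.rpow_mul hfac0]
    norm_num
  calc ‖x - y k‖ = Real.sqrt (‖x - y k‖ ^ 2) := (Real.sqrt_sq (norm_nonneg _)).symm
    _ ≤ Real.sqrt ((1 - C⁻¹ ^ 2) ^ k * ‖x‖ ^ 2) := Real.sqrt_le_sqrt (hsq k)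
    _ = (1 - C⁻¹ ^ 2) ^ ((k : ℝ) / 2) * ‖x‖ := by
        rw [← hrpow]
        exact Real.sqrt_sq (mul_nonneg (Real.rpow_nonneg hfac0 _) (norm_nonneg x))
end
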